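/- Let Π be a polyhedral complex in ℝⁿ such that the support |Π| is connected and satisfies the Minkowski-Weyl condition. For E ⊆ ℝⁿ let c(E) denote the closure in ℝⁿ × ℝ of the set of points λ·(u,1) with u ∈ E and λ > 0. Then the collection c(Π) = {c(Λ) | Λ ∈ Π} ∪ {rec(Λ) × {0} | Λ ∈ Π} is a conic polyhedral complex in ℝⁿ × ℝ_{≥0}, and its support equals c(|Π|). -/

import Mathlib

open Set Pointwise

variable {E : Type*} [NormedAddCommGroup E] [NormedSpace ℝ E]

/-- A polyhedron: an intersection of finitely many closed halfspaces. -/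
def IsPolyhedron (S : Set E) : Prop :=
  ∃ (m : ℕ) (f : Fin m → E →ₗ[ℝ] ℝ) (b : Fin m → ℝ), S = {x | ∀ i, f i x ≤ b i}

/-- A polytope: the convex hull of a (nonempty) finite set of points. -/
def IsPolytope (S : Set E) : Prop :=
  ∃ F : Finset E, F.Nonempty ∧ S = convexHull ℝ (F : Set E)

/-- A convex polyhedral cone: the set of nonnegative combinations of finitely
many vectors. -/
def IsPolyhedralCone (S : Set E) : Prop :=
  ∃ F : Finset E, S = {x | ∃ c : E → ℝ, (∀ v, 0 ≤ c v) ∧ x = ∑ v ∈ F, c v • v}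

/-- The local recession cone of `S` at `p`:
`{u | p + t • u ∈ S for all t ≥ 0}`. -/
def locRec (S : Set E) (p : E) : Set E := {u | ∀ t : ℝ, 0 ≤ t → p + t • u ∈ S}

/-- The recession cone of a set: the intersection of all local recession
cones. -/
def recSet (S : Set E) : Set E := ⋂ p ∈ S, locRec S p

/-- The recession cone of a polyhedron: `{u | S + u ⊆ S}`. -/
def recPoly (S : Set E) : Set E := {u | ∀ x ∈ S, x + u ∈ S}

/-- `S_x`: the set of points of `S` minimizing the linear functional `x`. -/
def faceSet (S : Set E) (x : E →ₗ[ℝ] ℝ) : Set E := {u ∈ S | ∀ v ∈ S, x u ≤ x v}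

/-- A face of `S`: a nonempty subset of the form `S_x`. -/
def IsFaceOf (F S : Set E) : Prop := F.Nonempty ∧ ∃ x : E →ₗ[ℝ] ℝ, F = faceSet S x

/-- A polyhedral complex: a nonempty finite collection of (nonempty) polyhedra,
closed under taking faces, in which any two members that meet intersect in a
common face. -/
def IsPolyComplex (P : Set (Set E)) : Prop :=
  P.Nonempty ∧ P.Finite ∧ (∀ S ∈ P, IsPolyhedron S ∧ S.Nonempty) ∧
  (∀ S ∈ P, ∀ F : Set E, IsFaceOf F S → F ∈ P) ∧
  ∀ S ∈ P, ∀ T ∈ P, (S ∩ T).Nonempty → IsFaceOf (S ∩ T) S ∧ IsFaceOf (S ∩ T) T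

/-- The support of a collection of sets. -/
def polySupport (P : Set (Set E)) : Set E := ⋃ S ∈ P, S

/-- The Minkowski-Weyl condition: every local recession cone equals the global
recession cone. -/
def MWCondition (S : Set E) : Prop := ∀ p ∈ S, locRec S p = recSet S

/-- A conic polyhedral complex: a polyhedral complex all of whose members are
convex polyhedral cones. -/
def IsConicPolyComplex (P : Set (Set E)) : Prop :=
  IsPolyComplex P ∧ ∀ S ∈ P, IsPolyhedralCone S

/-- Strongly convex: contains no affine line. -/
def StronglyConvexSet (S : Set E) : Prop :=
  ¬ ∃ p d : E, d ≠ 0 ∧ ∀ t : ℝ, p + t • d ∈ S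

/-- A fan: a conic polyhedral complex all of whose members are strongly
convex. -/
def IsFan (P : Set (Set E)) : Prop :=
  IsConicPolyComplex P ∧ ∀ S ∈ P, StronglyConvexSet S

/-- The recession of a complex: the collection of recession cones of its
members. -/
def recComplex (P : Set (Set E)) : Set (Set E) := {C | ∃ Λ ∈ P, C = recPoly Λ}

/-- The cone `c(S)` over a set `S ⊆ E`, inside `E × ℝ`: the closure of
`{t • (u, 1) | u ∈ S, t > 0}`. -/
def coneOver (S : Set E) : Set (E × ℝ) :=
  closure {y | ∃ u ∈ S, ∃ t : ℝ, 0 < t ∧ y = t • (u, (1 : ℝ))}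

/-- The open cone `c°(S)` over `S`: `{t • (u, 1) | u ∈ S, t > 0}`. -/
def openCone (S : Set E) : Set (E × ℝ) :=
  {y | ∃ u ∈ S, ∃ t : ℝ, 0 < t ∧ y = t • (u, (1 : ℝ))}

/-- The cone `c(Π)` of a complex: the cones over its members together with the
recession cones of its members placed at height `0`. -/
def coneComplex (P : Set (Set E)) : Set (Set (E × ℝ)) :=
  {C | ∃ Λ ∈ P, C = coneOver Λ} ∪
  {C | ∃ Λ ∈ P, C = (recPoly Λ) ×ˢ ({0} : Set ℝ)}

/-- `aff` of a conic complex in `E × ℝ`: the nonempty intersections of its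
members with the hyperplane `E × {1}`, regarded as subsets of `E`. -/
def affOf (P : Set (Set (E × ℝ))) : Set (Set E) :=
  {L | L.Nonempty ∧ ∃ σ ∈ P, L = {u | (u, (1 : ℝ)) ∈ σ}}

/-- A polyhedral set: a finite union of polyhedra. -/
def IsPolyhedralSet (S : Set E) : Prop :=
  ∃ (k : ℕ) (f : Fin k → Set E), (∀ i, IsPolyhedron (f i)) ∧ S = ⋃ i, f i

/-- A finite union of polytopes. -/
def IsFiniteUnionOfPolytopes (S : Set E) : Prop :=
  ∃ (k : ℕ) (f : Fin k → Set E), (∀ i, IsPolytope (f i)) ∧ S = ⋃ i, f i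



namespace S3Aux

open Finset

variable {V : Type*} [AddCommGroup V] [Module ℝ V]

def coneGen {ι : Type} [Fintype ι] (v : ι → V) : Set V :=
  {x | ∃ c : ι → ℝ, (∀ i, 0 ≤ c i) ∧ x = ∑ i, c i • v i}

lemma self_mem_coneGen {ι : Type} [Fintype ι] (v : ι → V) (i : ι) : v i ∈ coneGen v := by
  classical
  refine ⟨fun j => if j = i then 1 else 0, fun j => by dsimp only; split <;> norm_num, ?_⟩
  simp [ite_smul]

lemma zero_mem_coneGen {ι : Type} [Fintype ι] (v : ι → V) : 0 ∈ coneGen v :=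
  ⟨0, fun _ => le_refl 0, by simp⟩

lemma coneGen_subset_coneGen {ι κ : Type} [Fintype ι] [Fintype κ] {v : ι → V} {w : κ → V}
    (h : ∀ j, w j ∈ coneGen v) : coneGen w ⊆ coneGen v := by
  rintro x ⟨d, hd, rfl⟩
  choose c hc hcw using h
  refine ⟨fun i => ∑ j, d j * c j i,
    fun i => Finset.sum_nonneg fun j _ => mul_nonneg (hd j) (hc j i), ?_⟩
  calc ∑ j, d j • w j = ∑ j, ∑ i, (d j * c j i) • v i := by
        refine Finset.sum_congr rfl fun j _ => ?_
        rw [hcw j, Finset.smul_sum]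
        exact Finset.sum_congr rfl fun i _ => smul_smul _ _ _
    _ = ∑ i, ∑ j, (d j * c j i) • v i := Finset.sum_comm
    _ = ∑ i, (∑ j, d j * c j i) • v i := by
        exact Finset.sum_congr rfl fun i _ => (Finset.sum_smul).symm

lemma coneGen_inter_halfspace {ι : Type} [Fintype ι] (v : ι → V) (g : V →ₗ[ℝ] ℝ) :
    ∃ (κ : Type) (_ : Fintype κ) (w : κ → V),
      coneGen v ∩ {x | g x ≤ 0} = coneGen w := by
  classical
  set w : ι ⊕ ι × ι → V := fun j =>
    Sum.rec (fun i => if g (v i) ≤ 0 then v i else 0)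
      (fun p => if 0 < g (v p.1) ∧ g (v p.2) < 0 then
          g (v p.1) • v p.2 - g (v p.2) • v p.1 else 0) j with hwdef
  refine ⟨ι ⊕ ι × ι, inferInstance, w, ?_⟩
  have hwmem : ∀ j, w j ∈ coneGen v := by
    rintro (i | ⟨i, j⟩)
    · by_cases h : g (v i) ≤ 0
      · simpa [hwdef, h] using self_mem_coneGen v i
      · simpa [hwdef, h] using zero_mem_coneGen v
    · by_cases h : 0 < g (v i) ∧ g (v j) < 0
      · refine ⟨fun k => (if k = j then g (v i) else 0) + (if k = i then -g (v j) else 0),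
          fun k => ?_, ?_⟩
        · have h1 := h.1; have h2 := h.2
          dsimp only; split <;> split <;> linarith
        · simp only [hwdef, h, and_self, if_true, add_smul, Finset.sum_add_distrib, ite_smul,
            zero_smul, Finset.sum_ite_eq', Finset.mem_univ, if_true]
          rw [neg_smul]
          abel
      · simpa [hwdef, h] using zero_mem_coneGen v
  have hwneg : ∀ j, g (w j) ≤ 0 := by
    rintro (i | ⟨i, j⟩)
    · by_cases h : g (v i) ≤ 0 <;> simp [hwdef, h]
    · by_cases h : 0 < g (v i) ∧ g (v j) < 0 <;> simp [hwdef, h]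
      rw [mul_comm]
  refine Set.Subset.antisymm ?_ ?_
  · -- hard direction
    rintro x ⟨⟨c, hc, rfl⟩, hgx⟩
    simp only [Set.mem_setOf_eq] at hgx
    set A : ℝ := ∑ i, if 0 < g (v i) then c i * g (v i) else 0 with hA
    set B : ℝ := ∑ i, if g (v i) < 0 then c i * (-g (v i)) else 0 with hB
    have hA0 : 0 ≤ A := Finset.sum_nonneg fun i _ => by
      split
      · exact mul_nonneg (hc i) (by linarith [‹0 < g (v i)›])
      · exact le_refl 0
    have hB0 : 0 ≤ B := Finset.sum_nonneg fun i _ => by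
      split
      · exact mul_nonneg (hc i) (by linarith [‹g (v i) < 0›])
      · exact le_refl 0
    have hgsum : g (∑ i, c i • v i) = ∑ i, c i * g (v i) := by
      rw [map_sum]; exact Finset.sum_congr rfl fun i _ => by rw [map_smul, smul_eq_mul]
    have hAB : A ≤ B := by
      have hd : A - B = ∑ i, c i * g (v i) := by
        rw [hA, hB, ← Finset.sum_sub_distrib]
        refine Finset.sum_congr rfl fun i _ => ?_
        rcases lt_trichotomy (g (v i)) 0 with h | h | h
        · rw [if_neg (not_lt.2 h.le), if_pos h]; ring
        · rw [if_neg (by rw [h]; exact lt_irrefl 0), if_neg (by rw [h]; exact lt_irrefl 0), h]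
          ring
        · rw [if_pos h, if_neg (asymm h)]; ring
      rw [hgsum] at hgx
      linarith [hd ▸ hgx]
    by_cases hApos : 0 < A
    · -- main case
      have hBpos : 0 < B := lt_of_lt_of_le hApos hAB
      have hBne : B ≠ 0 := ne_of_gt hBpos
      refine ⟨fun j => Sum.rec
        (fun i => if g (v i) < 0 then c i * (1 - A / B) else if g (v i) ≤ 0 then c i else 0)
        (fun p => if 0 < g (v p.1) ∧ g (v p.2) < 0 then c p.1 * c p.2 / B else 0) j, ?_, ?_⟩
      · rintro (i | ⟨i, j⟩)
        · dsimp only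
          have h1 : A / B ≤ 1 := (div_le_one hBpos).2 hAB
          split
          · exact mul_nonneg (hc i) (by linarith)
          · split
            · exact hc i
            · exact le_refl 0
        · dsimp only
          split
          · exact div_nonneg (mul_nonneg (hc i) (hc j)) hB0
          · exact le_refl 0
      · rw [Fintype.sum_sum_type, Fintype.sum_prod_type]
        have hsplit : ∀ i j : ι,
            (if 0 < g (v i) ∧ g (v j) < 0 then c i * c j / B else 0) • w (Sum.inr (i, j))
            = (if 0 < g (v i) ∧ g (v j) < 0 then (c i * c j / B * g (v i)) • v j else 0)
              + (if 0 < g (v i) ∧ g (v j) < 0 then (c i * c j / B * (-g (v j))) • v i else 0) := by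
          intro i j
          by_cases h : 0 < g (v i) ∧ g (v j) < 0
          · simp only [hwdef, h, and_self, if_true, smul_sub, smul_smul]
            rw [sub_eq_add_neg, ← neg_smul]
            congr 2 <;> ring
          · simp [h]
        have eX : ∑ i, ∑ j, (if 0 < g (v i) ∧ g (v j) < 0 then
              (c i * c j / B * g (v i)) • v j else 0)
            = ∑ j, (if g (v j) < 0 then (A * (c j / B)) • v j else 0) := by
          rw [Finset.sum_comm]
          refine Finset.sum_congr rfl fun j _ => ?_
          by_cases hj : g (v j) < 0
          · have hrhs : (if g (v j) < 0 then (A * (c j / B)) • v j else 0)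
                = (A * (c j / B)) • v j := if_pos hj
            rw [hrhs]
            simp only [hj, and_true]
            have h1 : ∀ i, (if 0 < g (v i) then (c i * c j / B * g (v i)) • v j else 0)
                = (if 0 < g (v i) then c i * g (v i) else 0) • ((c j / B) • v j) := by
              intro i
              by_cases hi : 0 < g (v i)
              · rw [if_pos hi, if_pos hi, smul_smul]; congr 1; ring
              · rw [if_neg hi, if_neg hi, zero_smul]
            rw [Finset.sum_congr rfl fun i _ => h1 i, ← Finset.sum_smul, ← hA, smul_smul]
          · simp [hj]
        have eY : ∑ i, ∑ j, (if 0 < g (v i) ∧ g (v j) < 0 then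
              (c i * c j / B * (-g (v j))) • v i else 0)
            = ∑ i, (if 0 < g (v i) then c i • v i else 0) := by
          refine Finset.sum_congr rfl fun i _ => ?_
          by_cases hi : 0 < g (v i)
          · have hrhs : (if 0 < g (v i) then c i • v i else 0) = c i • v i := if_pos hi
            rw [hrhs]
            simp only [hi, true_and]
            have h1 : ∀ j, (if g (v j) < 0 then (c i * c j / B * (-g (v j))) • v i else 0)
                = (if g (v j) < 0 then c j * (-g (v j)) else 0) • ((c i / B) • v i) := by
              intro j
              by_cases hj : g (v j) < 0
              · rw [if_pos hj, if_pos hj, smul_smul]; congr 1; ring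
              · rw [if_neg hj, if_neg hj, zero_smul]
            rw [Finset.sum_congr rfl fun j _ => h1 j, ← Finset.sum_smul, ← hB, smul_smul,
              mul_div_cancel₀ (c i) hBne]
          · simp [hi]
        have eZ : ∀ i, (if g (v i) < 0 then c i * (1 - A / B) else if g (v i) ≤ 0 then c i else 0)
              • w (Sum.inl i)
            = (if g (v i) < 0 then (c i * (1 - A / B)) • v i
                else if g (v i) = 0 then c i • v i else 0) := by
          intro i
          have hw1 : w (Sum.inl i) = if g (v i) ≤ 0 then v i else 0 := rfl
          rw [hw1]
          rcases lt_trichotomy (g (v i)) 0 with h | h | h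
          · rw [if_pos h, if_pos h.le, if_pos h]
          · have h1 : ¬ g (v i) < 0 := by rw [h]; exact lt_irrefl 0
            have hle : g (v i) ≤ 0 := le_of_eq h
            rw [if_neg h1, if_pos hle, if_pos hle, if_neg h1, if_pos h]
          · have h1 : ¬ g (v i) < 0 := asymm h
            have h2 : ¬ g (v i) ≤ 0 := not_le.2 h
            have h3 : ¬ g (v i) = 0 := ne_of_gt h
            rw [if_neg h1, if_neg h2, if_neg h2, if_neg h1, if_neg h3, zero_smul]
        calc ∑ i, c i • v i
            = ∑ i, ((if g (v i) < 0 then (c i * (1 - A / B)) • v i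
                  else if g (v i) = 0 then c i • v i else 0)
                + ((if g (v i) < 0 then (A * (c i / B)) • v i else 0)
                + (if 0 < g (v i) then c i • v i else 0))) := by
              refine Finset.sum_congr rfl fun i _ => ?_
              rcases lt_trichotomy (g (v i)) 0 with h | h | h
              · rw [if_pos h, if_pos h, if_neg (asymm h), add_zero, ← add_smul]
                congr 1
                field_simp
                ring
              · have h1 : ¬ g (v i) < 0 := by rw [h]; exact lt_irrefl 0
                have h2 : ¬ (0:ℝ) < g (v i) := by rw [h]; exact lt_irrefl 0
                rw [if_neg h1, if_pos h, if_neg h1, if_neg h2, add_zero, add_zero]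
              · have h1 : ¬ g (v i) < 0 := asymm h
                have h2 : ¬ g (v i) = 0 := ne_of_gt h
                rw [if_neg h1, if_neg h2, if_neg h1, if_pos h, zero_add, zero_add]
          _ = (∑ i, (if g (v i) < 0 then (c i * (1 - A / B)) • v i
                  else if g (v i) = 0 then c i • v i else 0))
              + ((∑ i, (if g (v i) < 0 then (A * (c i / B)) • v i else 0))
              + (∑ i, (if 0 < g (v i) then c i • v i else 0))) := by
              rw [Finset.sum_add_distrib, Finset.sum_add_distrib]
          _ = (∑ i, (if g (v i) < 0 then c i * (1 - A / B)
                  else if g (v i) ≤ 0 then c i else 0) • w (Sum.inl i))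
              + ∑ i, ∑ j, (if 0 < g (v i) ∧ g (v j) < 0 then c i * c j / B else 0)
                  • w (Sum.inr (i, j)) := by
              rw [Finset.sum_congr rfl fun i _ => (eZ i).symm]
              congr 1
              rw [Finset.sum_congr rfl fun i _ => Finset.sum_congr rfl fun j _ => hsplit i j]
              rw [Finset.sum_congr rfl fun i _ =>
                (Finset.sum_add_distrib :
                  ∑ j, _ = _), Finset.sum_add_distrib, eX, eY]
    · -- A = 0 case
      have hAz : A = 0 := le_antisymm (not_lt.1 hApos) hA0
      have hczero : ∀ i, 0 < g (v i) → c i = 0 := by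
        intro i hi
        have h1 : ∀ j ∈ Finset.univ, 0 ≤ (if 0 < g (v j) then c j * g (v j) else 0 : ℝ) := by
          intro j _
          split
          · exact mul_nonneg (hc j) (by linarith [‹0 < g (v j)›])
          · exact le_refl 0
        have h2 := (Finset.sum_eq_zero_iff_of_nonneg h1).1 hAz i (Finset.mem_univ i)
        rw [if_pos hi] at h2
        rcases mul_eq_zero.1 h2 with h | h
        · exact h
        · exact absurd h (ne_of_gt hi)
      refine ⟨fun j => Sum.rec (fun i => if g (v i) ≤ 0 then c i else 0) (fun _ => 0) j,
        ?_, ?_⟩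
      · rintro (i | p)
        · dsimp only; split
          · exact hc i
          · exact le_refl 0
        · exact le_refl 0
      · rw [Fintype.sum_sum_type]
        simp only [zero_smul, Finset.sum_const_zero, add_zero]
        refine Finset.sum_congr rfl fun i _ => ?_
        by_cases h : g (v i) ≤ 0
        · simp [hwdef, h]
        · simp [hwdef, h, hczero i (not_le.1 h)]
  · -- easy direction
    intro x hx
    refine ⟨coneGen_subset_coneGen hwmem hx, ?_⟩
    obtain ⟨d, hd, rfl⟩ := hx
    have hge : g (∑ j, d j • w j) = ∑ j, d j * g (w j) := by
      rw [map_sum]; exact Finset.sum_congr rfl fun j _ => by rw [map_smul, smul_eq_mul]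
    rw [Set.mem_setOf_eq, hge]
    exact Finset.sum_nonpos fun j _ => mul_nonpos_of_nonneg_of_nonpos (hd j) (hwneg j)


lemma hcone_coneGen {V : Type*} [AddCommGroup V] [Module ℝ V] [Module.Finite ℝ V]
    (m : ℕ) (f : Fin m → V →ₗ[ℝ] ℝ) :
    ∃ (ι : Type) (_ : Fintype ι) (v : ι → V), {x | ∀ i, f i x ≤ 0} = coneGen v := by
  induction m with
  | zero =>
    classical
    set d := Module.finrank ℝ V with hd
    let b : Module.Basis (Fin d) ℝ V := Module.finBasis ℝ V
    refine ⟨Fin d ⊕ Fin d, inferInstance,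
      fun j => Sum.rec (fun i => b i) (fun i => -(b i)) j, ?_⟩
    ext x
    simp only [Set.mem_setOf_eq]
    constructor
    · intro _
      refine ⟨fun j => Sum.rec (fun i => max (b.repr x i) 0) (fun i => max (-(b.repr x i)) 0) j,
        fun j => by rcases j with i | i <;> exact le_max_right _ _, ?_⟩
      rw [Fintype.sum_sum_type]
      have h1 : ∀ i : Fin d, (max (-(b.repr x i)) 0 : ℝ) • (-(b i))
          = (-(max (-(b.repr x i)) 0 : ℝ)) • (b i) := by
        intro i; rw [smul_neg, neg_smul]
      calc x = ∑ i, b.repr x i • b i := (b.sum_repr x).symm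
        _ = ∑ i, ((max (b.repr x i) 0 : ℝ) + (-(max (-(b.repr x i)) 0))) • b i := by
            refine Finset.sum_congr rfl fun i _ => ?_
            congr 1
            rw [← sub_eq_add_neg, max_zero_sub_max_neg_zero_eq_self]
        _ = ∑ i, ((max (b.repr x i) 0 : ℝ) • b i) + ∑ i, ((-(max (-(b.repr x i)) 0 : ℝ)) • b i) := by
            rw [← Finset.sum_add_distrib]
            exact Finset.sum_congr rfl fun i _ => add_smul _ _ _
        _ = _ := by
            congr 1
            exact Finset.sum_congr rfl fun i _ => (h1 i).symm
    · rintro - i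
      exact absurd i.2 (by omega)
  | succ k ih =>
    obtain ⟨ι, _, v, hv⟩ := ih (fun i => f i.castSucc)
    obtain ⟨κ, _, w, hw⟩ := coneGen_inter_halfspace v (f (Fin.last k))
    refine ⟨κ, inferInstance, w, ?_⟩
    rw [← hw, ← hv]
    ext x
    simp only [Set.mem_setOf_eq, Set.mem_inter_iff]
    constructor
    · intro h
      exact ⟨fun i => h i.castSucc, h (Fin.last k)⟩
    · rintro ⟨h1, h2⟩ i
      induction i using Fin.lastCases with
      | last => exact h2
      | cast i => exact h1 i

end S3Aux

section PCone

open S3Aux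

variable {E : Type*} [NormedAddCommGroup E] [NormedSpace ℝ E]

lemma coneGen_isPolyhedralCone {ι : Type} [Fintype ι] (v : ι → E) :
    IsPolyhedralCone (coneGen v) := by
  classical
  refine ⟨Finset.univ.image v, ?_⟩
  ext x
  constructor
  · rintro ⟨c, hc, rfl⟩
    refine ⟨fun w => ∑ i ∈ Finset.univ.filter (fun i => v i = w), c i,
      fun w => Finset.sum_nonneg fun i _ => hc i, ?_⟩
    rw [← Finset.sum_fiberwise_of_maps_to
      (fun i _ => Finset.mem_image_of_mem v (Finset.mem_univ i)) (fun i => c i • v i)]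
    refine Finset.sum_congr rfl fun w hw => ?_
    rw [Finset.sum_smul]
    refine Finset.sum_congr rfl fun i hi => ?_
    rw [(Finset.mem_filter.1 hi).2]
  · rintro ⟨c, hc, rfl⟩
    refine ⟨fun i => c (v i) / (Finset.univ.filter (fun j => v j = v i)).card,
      fun i => div_nonneg (hc _) (Nat.cast_nonneg _), ?_⟩
    rw [← Finset.sum_fiberwise_of_maps_to
      (fun i _ => Finset.mem_image_of_mem v (Finset.mem_univ i))
      (fun i => (c (v i) / ((Finset.univ.filter (fun j => v j = v i)).card : ℝ)) • v i)]
    refine Finset.sum_congr rfl fun w hw => ?_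
    have hNw : ∀ i ∈ Finset.univ.filter (fun j => v j = w),
        (c (v i) / ((Finset.univ.filter (fun j => v j = v i)).card : ℝ)) • v i
        = (c w / ((Finset.univ.filter (fun j => v j = w)).card : ℝ)) • w := by
      intro i hi
      have h2 := (Finset.mem_filter.1 hi).2
      rw [h2]
    rw [Finset.sum_congr rfl hNw, Finset.sum_const]
    obtain ⟨i, -, rfl⟩ := Finset.mem_image.1 hw
    have hpos : 0 < (Finset.univ.filter (fun j => v j = v i)).card :=
      Finset.card_pos.2 ⟨i, Finset.mem_filter.2 ⟨Finset.mem_univ i, rfl⟩⟩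
    rw [← Nat.cast_smul_eq_nsmul ℝ, smul_smul]
    congr 1
    have : ((Finset.univ.filter (fun j => v j = v i)).card : ℝ) ≠ 0 :=
      Nat.cast_ne_zero.2 (Nat.pos_iff_ne_zero.mp hpos)
    field_simp

/-- An `H`-cone: finite intersection of homogeneous halfspaces. -/
def IsHCone (S : Set E) : Prop :=
  ∃ (m : ℕ) (f : Fin m → E →ₗ[ℝ] ℝ), S = {x | ∀ i, f i x ≤ 0}

lemma IsHCone.exists_coneGen [FiniteDimensional ℝ E] {S : Set E} (h : IsHCone S) :
    ∃ (ι : Type) (_ : Fintype ι) (v : ι → E), S = coneGen v := by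
  obtain ⟨m, f, rfl⟩ := h
  exact hcone_coneGen m f

lemma IsHCone.isPolyhedralCone [FiniteDimensional ℝ E] {S : Set E} (h : IsHCone S) :
    IsPolyhedralCone S := by
  obtain ⟨ι, _, v, rfl⟩ := h.exists_coneGen
  exact coneGen_isPolyhedralCone v

lemma IsHCone.isPolyhedron {S : Set E} (h : IsHCone S) : IsPolyhedron S := by
  obtain ⟨m, f, rfl⟩ := h
  exact ⟨m, f, 0, rfl⟩

lemma isPolyhedron_inter {S T : Set E} (hS : IsPolyhedron S) (hT : IsPolyhedron T) :
    IsPolyhedron (S ∩ T) := by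
  obtain ⟨m, f, b, rfl⟩ := hS
  obtain ⟨m', f', b', rfl⟩ := hT
  refine ⟨m + m', Fin.append f f', Fin.append b b', ?_⟩
  ext x
  simp only [Set.mem_inter_iff, Set.mem_setOf_eq]
  constructor
  · rintro ⟨h1, h2⟩ i
    refine Fin.addCases (fun i => ?_) (fun i => ?_) i
    · rw [Fin.append_left, Fin.append_left]; exact h1 i
    · rw [Fin.append_right, Fin.append_right]; exact h2 i
  · intro h
    constructor
    · intro i
      have := h (Fin.castAdd m' i)
      rwa [Fin.append_left, Fin.append_left] at this
    · intro i
      have := h (Fin.natAdd m i)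
      rwa [Fin.append_right, Fin.append_right] at this

lemma IsHCone.inter {S T : Set E} (hS : IsHCone S) (hT : IsHCone T) :
    IsHCone (S ∩ T) := by
  obtain ⟨m, f, rfl⟩ := hS
  obtain ⟨m', f', rfl⟩ := hT
  refine ⟨m + m', Fin.append f f', ?_⟩
  ext x
  simp only [Set.mem_inter_iff, Set.mem_setOf_eq]
  constructor
  · rintro ⟨h1, h2⟩ i
    refine Fin.addCases (fun i => ?_) (fun i => ?_) i
    · rw [Fin.append_left]; exact h1 i
    · rw [Fin.append_right]; exact h2 i
  · intro h
    exact ⟨fun i => by have := h (Fin.castAdd m' i); rwa [Fin.append_left] at this,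
      fun i => by have := h (Fin.natAdd m i); rwa [Fin.append_right] at this⟩

lemma IsPolyhedron.isClosed [FiniteDimensional ℝ E] {S : Set E} (h : IsPolyhedron S) :
    IsClosed S := by
  obtain ⟨m, f, b, rfl⟩ := h
  have : {x : E | ∀ i, f i x ≤ b i} = ⋂ i, (f i) ⁻¹' (Set.Iic (b i)) := by
    ext x; simp [Set.mem_iInter]
  rw [this]
  exact isClosed_iInter fun i =>
    IsClosed.preimage (f i).continuous_of_finiteDimensional isClosed_Iic

end PCone



section PolyBasics

open S3Aux

variable {E : Type*} [NormedAddCommGroup E] [NormedSpace ℝ E]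

lemma nonpos_of_forall_add_nat_mul_le {a b c : ℝ} (h : ∀ k : ℕ, a + k * c ≤ b) : c ≤ 0 := by
  by_contra hc
  push_neg at hc
  obtain ⟨k, hk⟩ := exists_nat_gt ((b - a) / c)
  have h2 := h k
  rw [div_lt_iff₀ hc] at hk
  linarith

lemma nonpos_of_forall_ray {a b c : ℝ} (h : ∀ t : ℝ, 0 ≤ t → a + t * c ≤ b) : c ≤ 0 :=
  nonpos_of_forall_add_nat_mul_le (fun k => h k (Nat.cast_nonneg k))

variable {S : Set E}

lemma zero_mem_recPoly : (0 : E) ∈ recPoly S := fun x hx => by simpa using hx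

lemma recPoly_mem_char {m : ℕ} {f : Fin m → E →ₗ[ℝ] ℝ} {b : Fin m → ℝ}
    (hS : S = {x | ∀ i, f i x ≤ b i}) (hne : S.Nonempty) :
    recPoly S = {u | ∀ i, f i u ≤ 0} := by
  ext u
  constructor
  · intro hu
    obtain ⟨p, hp⟩ := hne
    have hiter : ∀ k : ℕ, p + (k : ℝ) • u ∈ S := by
      intro k
      induction k with
      | zero => simpa using hp
      | succ n ihn =>
        have h2 := hu _ ihn
        have heq : p + (n : ℝ) • u + u = p + (((n+1 : ℕ) : ℝ)) • u := by
          push_cast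
          rw [add_smul, one_smul]
          abel
        rwa [heq] at h2
    intro i
    refine nonpos_of_forall_add_nat_mul_le (a := f i p) (b := b i) fun k => ?_
    have hmem := hiter k
    rw [hS] at hmem
    have h3 := hmem i
    rwa [map_add, map_smul, smul_eq_mul] at h3
  · intro hu x hx
    rw [hS] at hx ⊢
    intro i
    have h1 := hx i
    have h2 := hu i
    rw [map_add]
    linarith

lemma recPoly_ray {m : ℕ} {f : Fin m → E →ₗ[ℝ] ℝ} {b : Fin m → ℝ}
    (hS : S = {x | ∀ i, f i x ≤ b i}) {u p : E} (hu : u ∈ recPoly S) (hp : p ∈ S)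
    {t : ℝ} (ht : 0 ≤ t) : p + t • u ∈ S := by
  rw [recPoly_mem_char hS ⟨p, hp⟩] at hu
  rw [hS] at hp ⊢
  intro i
  rw [map_add, map_smul, smul_eq_mul]
  have h1 := hp i
  have h2 := mul_nonpos_of_nonneg_of_nonpos ht (hu i)
  linarith

lemma locRec_subset_recPoly {m : ℕ} {f : Fin m → E →ₗ[ℝ] ℝ} {b : Fin m → ℝ}
    (hS : S = {x | ∀ i, f i x ≤ b i}) {p : E} (hp : p ∈ S) :
    locRec S p ⊆ recPoly S := by
  intro u hu
  rw [recPoly_mem_char hS ⟨p, hp⟩]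
  intro i
  refine nonpos_of_forall_ray (a := f i p) (b := b i) fun t ht => ?_
  have h1 := hu t ht
  rw [hS] at h1
  have h2 := h1 i
  rwa [map_add, map_smul, smul_eq_mul] at h2

lemma recPoly_subset_locRec {m : ℕ} {f : Fin m → E →ₗ[ℝ] ℝ} {b : Fin m → ℝ}
    (hS : S = {x | ∀ i, f i x ≤ b i}) {p : E} (hp : p ∈ S) :
    recPoly S ⊆ locRec S p :=
  fun _ hu t ht => recPoly_ray hS hu hp ht

lemma faceSet_subset {x : E →ₗ[ℝ] ℝ} : faceSet S x ⊆ S := fun _ h => h.1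

lemma faceSet_zero (S : Set E) : faceSet S (0 : E →ₗ[ℝ] ℝ) = S := by
  ext u
  simp [faceSet]

lemma self_isFaceOf (hne : S.Nonempty) : IsFaceOf S S :=
  ⟨hne, 0, (faceSet_zero S).symm⟩

lemma faceSet_eq_inter {x : E →ₗ[ℝ] ℝ} {p : E} (hp : p ∈ faceSet S x) :
    faceSet S x = S ∩ {u | x u ≤ x p} := by
  ext u
  constructor
  · intro hu
    exact ⟨hu.1, hu.2 p hp.1⟩
  · rintro ⟨hu1, hu2⟩
    exact ⟨hu1, fun v hv => le_trans hu2 (hp.2 v hv)⟩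

lemma halfspace_isPolyhedron (x : E →ₗ[ℝ] ℝ) (c : ℝ) : IsPolyhedron {u : E | x u ≤ c} :=
  ⟨1, fun _ => x, fun _ => c, by ext u; simp⟩

lemma IsPolyhedron.faceSet_poly (hS : IsPolyhedron S) {x : E →ₗ[ℝ] ℝ} {p : E}
    (hp : p ∈ faceSet S x) : IsPolyhedron (faceSet S x) := by
  rw [faceSet_eq_inter hp]
  exact isPolyhedron_inter hS (halfspace_isPolyhedron x (x p))

lemma faceSet_nonneg_rec {x : E →ₗ[ℝ] ℝ} {p : E} (hp : p ∈ faceSet S x) {w : E}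
    (hw : w ∈ recPoly S) : 0 ≤ x w := by
  have h1 : p + w ∈ S := hw p hp.1
  have h2 := hp.2 _ h1
  rw [map_add] at h2
  linarith

lemma recPoly_faceSet (hS : IsPolyhedron S) {x : E →ₗ[ℝ] ℝ}
    (hFne : (faceSet S x).Nonempty) :
    recPoly (faceSet S x) = recPoly S ∩ {w | x w = 0} := by
  obtain ⟨p, hp⟩ := hFne
  obtain ⟨m, f, b, hrep⟩ := hS
  ext w
  constructor
  · intro hw
    obtain ⟨m', f', b', hrep'⟩ :=
      IsPolyhedron.faceSet_poly ⟨m, f, b, hrep⟩ hp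
    have hwS : w ∈ recPoly S := by
      have hray : ∀ t : ℝ, 0 ≤ t → p + t • w ∈ S := fun t ht =>
        faceSet_subset (recPoly_ray hrep' hw hp ht)
      exact locRec_subset_recPoly hrep hp.1 hray
    refine ⟨hwS, ?_⟩
    have hge : 0 ≤ x w := faceSet_nonneg_rec hp hwS
    have hin : p + w ∈ faceSet S x := hw p hp
    have hle := hin.2 p hp.1
    rw [map_add] at hle
    simp only [Set.mem_setOf_eq]
    linarith
  · rintro ⟨hwS, hx0⟩ q hq
    simp only [Set.mem_setOf_eq] at hx0
    refine ⟨hwS q hq.1, fun v hv => ?_⟩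
    rw [map_add, hx0, add_zero]
    exact hq.2 v hv

lemma IsPolyhedron.locRec_eq (hS : IsPolyhedron S) {p : E} (hp : p ∈ S) :
    locRec S p = recPoly S := by
  obtain ⟨m, f, b, hrep⟩ := hS
  exact Set.Subset.antisymm (locRec_subset_recPoly hrep hp) (recPoly_subset_locRec hrep hp)

lemma recPoly_isHCone (hS : IsPolyhedron S) (hne : S.Nonempty) : IsHCone (recPoly S) := by
  obtain ⟨m, f, b, hrep⟩ := hS
  exact ⟨m, f, recPoly_mem_char hrep hne⟩

end PolyBasics

section ConeOver

open S3Aux Filter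

variable {E : Type*} [NormedAddCommGroup E] [NormedSpace ℝ E] {S : Set E}

lemma mem_openCone {y : E × ℝ} : y ∈ openCone S ↔ 0 < y.2 ∧ y.2⁻¹ • y.1 ∈ S := by
  constructor
  · rintro ⟨u, hu, t, ht, rfl⟩
    have h2 : (t • (u, (1:ℝ))).2 = t := by simp
    have h1 : (t • (u, (1:ℝ))).1 = t • u := by simp
    rw [h1, h2]
    refine ⟨ht, ?_⟩
    rw [smul_smul, inv_mul_cancel₀ (ne_of_gt ht), one_smul]
    exact hu
  · rintro ⟨h1, h2⟩
    refine ⟨y.2⁻¹ • y.1, h2, y.2, h1, ?_⟩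
    have : y.2 • ((y.2⁻¹ • y.1, (1:ℝ))) = (y.2 • y.2⁻¹ • y.1, y.2 * 1) := rfl
    rw [this, smul_smul, mul_inv_cancel₀ (ne_of_gt h1), one_smul, mul_one]

lemma openCone_inter {T : Set E} : openCone S ∩ openCone T = openCone (S ∩ T) := by
  ext y
  simp only [Set.mem_inter_iff, mem_openCone]
  tauto

lemma smul_mem_openCone {u : E} (hu : u ∈ S) {t : ℝ} (ht : 0 < t) :
    t • (u, (1:ℝ)) ∈ openCone S := ⟨u, hu, t, ht, rfl⟩

lemma mk_one_mem_openCone {u : E} (hu : u ∈ S) : (u, (1:ℝ)) ∈ openCone S := by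
  have := smul_mem_openCone hu one_pos
  simpa using this

/-- The homogenization of a polyhedron. -/
lemma coneOver_hom [FiniteDimensional ℝ E] {m : ℕ} {f : Fin m → E →ₗ[ℝ] ℝ} {b : Fin m → ℝ}
    (hrep : S = {x | ∀ i, f i x ≤ b i}) (hne : S.Nonempty) :
    coneOver S = {y : E × ℝ | 0 ≤ y.2 ∧ ∀ i, f i y.1 ≤ b i * y.2} := by
  have hsub : openCone S ⊆ {y : E × ℝ | 0 ≤ y.2 ∧ ∀ i, f i y.1 ≤ b i * y.2} := by
    intro y hy
    rw [mem_openCone] at hy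
    obtain ⟨h1, h2⟩ := hy
    rw [hrep] at h2
    refine ⟨le_of_lt h1, fun i => ?_⟩
    have h3 := h2 i
    rw [map_smul, smul_eq_mul] at h3
    calc f i y.1 = y.2 * (y.2⁻¹ * f i y.1) := by field_simp
      _ ≤ y.2 * b i := by
          refine mul_le_mul_of_nonneg_left h3 (le_of_lt h1)
      _ = b i * y.2 := mul_comm _ _
  have hclosed : IsClosed {y : E × ℝ | 0 ≤ y.2 ∧ ∀ i, f i y.1 ≤ b i * y.2} := by
    have he : {y : E × ℝ | 0 ≤ y.2 ∧ ∀ i, f i y.1 ≤ b i * y.2}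
        = {y : E × ℝ | 0 ≤ y.2} ∩ ⋂ i, {y : E × ℝ | f i y.1 ≤ b i * y.2} := by
      ext y
      simp [Set.mem_iInter]
    rw [he]
    refine IsClosed.inter (isClosed_le continuous_const continuous_snd) ?_
    refine isClosed_iInter fun i => isClosed_le ?_ ?_
    · exact (f i).continuous_of_finiteDimensional.comp continuous_fst
    · exact continuous_const.mul continuous_snd
  refine Set.Subset.antisymm (closure_minimal hsub hclosed) ?_
  intro y hy
  obtain ⟨hy2, hyf⟩ := hy
  rcases lt_or_eq_of_le hy2 with hpos | hzero
  · refine subset_closure ?_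
    show y ∈ openCone S
    rw [mem_openCone]
    refine ⟨hpos, ?_⟩
    rw [hrep]
    intro i
    rw [map_smul, smul_eq_mul]
    have h3 := hyf i
    calc y.2⁻¹ * f i y.1 ≤ y.2⁻¹ * (b i * y.2) := by
          refine mul_le_mul_of_nonneg_left h3 (inv_nonneg.2 hy2)
      _ = b i := by field_simp
  · -- y.2 = 0
    obtain ⟨p, hp⟩ := hne
    have hw : ∀ i, f i y.1 ≤ 0 := by
      intro i
      have := hyf i
      rw [← hzero, mul_zero] at this
      exact this
    have hmem : ∀ k : ℕ, (((k:ℝ)+1)⁻¹ • p + y.1, ((k:ℝ)+1)⁻¹) ∈ openCone S := by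
      intro k
      have hkpos : (0:ℝ) < ((k:ℝ)+1)⁻¹ := by positivity
      rw [mem_openCone]
      constructor
      · exact hkpos
      · show (((k:ℝ)+1)⁻¹)⁻¹ • (((k:ℝ)+1)⁻¹ • p + y.1) ∈ S
        rw [inv_inv, smul_add, smul_smul, mul_inv_cancel₀ (by positivity), one_smul]
        rw [hrep]
        intro i
        rw [map_add, map_smul, smul_eq_mul]
        have h1 : f i p ≤ b i := by rw [hrep] at hp; exact hp i
        have h2 : ((k:ℝ)+1) * f i y.1 ≤ 0 :=
          mul_nonpos_of_nonneg_of_nonpos (by positivity) (hw i)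
        linarith
    have htend : Tendsto (fun k : ℕ => ((((k:ℝ)+1)⁻¹ • p + y.1, ((k:ℝ)+1)⁻¹) : E × ℝ))
        atTop (nhds y) := by
      have h0 : Tendsto (fun k : ℕ => (((k:ℝ)+1)⁻¹ : ℝ)) atTop (nhds 0) := by
        have h4 := tendsto_one_div_add_atTop_nhds_zero_nat (𝕜 := ℝ)
        simpa [one_div] using h4
      have h1 : Tendsto (fun k : ℕ => ((k:ℝ)+1)⁻¹ • p + y.1) atTop (nhds y.1) := by
        have h2 := (h0.smul_const p).add (tendsto_const_nhds (x := y.1))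
        simpa using h2
      have h3 : Tendsto (fun k : ℕ => (((k:ℝ)+1)⁻¹ : ℝ)) atTop (nhds y.2) := by
        rwa [← hzero]
      have h5 := h1.prodMk_nhds h3
      simpa using h5
    exact mem_closure_of_tendsto htend (Filter.Eventually.of_forall hmem)

lemma coneOver_eq [FiniteDimensional ℝ E] (hS : IsPolyhedron S) (hne : S.Nonempty) :
    coneOver S = openCone S ∪ (recPoly S) ×ˢ ({0} : Set ℝ) := by
  obtain ⟨m, f, b, hrep⟩ := hS
  rw [coneOver_hom hrep hne]
  ext y
  simp only [Set.mem_union, Set.mem_setOf_eq, Set.mem_prod, Set.mem_singleton_iff]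
  constructor
  · rintro ⟨hy2, hyf⟩
    rcases lt_or_eq_of_le hy2 with hpos | hzero
    · left
      rw [mem_openCone]
      refine ⟨hpos, ?_⟩
      rw [hrep]
      intro i
      rw [map_smul, smul_eq_mul]
      have h3 := hyf i
      calc y.2⁻¹ * f i y.1 ≤ y.2⁻¹ * (b i * y.2) :=
            mul_le_mul_of_nonneg_left h3 (inv_nonneg.2 hy2)
        _ = b i := by field_simp
    · right
      refine ⟨?_, hzero.symm⟩
      rw [recPoly_mem_char hrep hne]
      intro i
      have h3 := hyf i
      rw [← hzero, mul_zero] at h3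
      exact h3
  · rintro (hy | ⟨hy1, hy2⟩)
    · rw [mem_openCone] at hy
      obtain ⟨h1, h2⟩ := hy
      rw [hrep] at h2
      refine ⟨le_of_lt h1, fun i => ?_⟩
      have h3 := h2 i
      rw [map_smul, smul_eq_mul] at h3
      calc f i y.1 = y.2 * (y.2⁻¹ * f i y.1) := by field_simp
        _ ≤ y.2 * b i := mul_le_mul_of_nonneg_left h3 (le_of_lt h1)
        _ = b i * y.2 := mul_comm _ _
    · rw [recPoly_mem_char hrep hne] at hy1
      rw [hy2]
      exact ⟨le_refl 0, fun i => by rw [mul_zero]; exact hy1 i⟩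

lemma coneOver_isHCone [FiniteDimensional ℝ E] (hS : IsPolyhedron S) (hne : S.Nonempty) :
    IsHCone (coneOver S) := by
  obtain ⟨m, f, b, hrep⟩ := hS
  rw [coneOver_hom hrep hne]
  have h1 : IsHCone {y : E × ℝ | 0 ≤ y.2} :=
    ⟨1, fun _ => -(LinearMap.snd ℝ E ℝ), by ext y; simp⟩
  have h2 : IsHCone {y : E × ℝ | ∀ i, f i y.1 ≤ b i * y.2} := by
    refine ⟨m, fun i => (f i).comp (LinearMap.fst ℝ E ℝ) - b i • (LinearMap.snd ℝ E ℝ), ?_⟩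
    ext y
    simp only [Set.mem_setOf_eq, LinearMap.sub_apply, LinearMap.comp_apply,
      LinearMap.smul_apply, LinearMap.fst_apply, LinearMap.snd_apply, smul_eq_mul,
      sub_nonpos, sub_le_iff_le_add]
    constructor
    · intro h i; have := h i; linarith
    · intro h i; have := h i; linarith
  have h3 := h1.inter h2
  have he : {y : E × ℝ | 0 ≤ y.2} ∩ {y : E × ℝ | ∀ i, f i y.1 ≤ b i * y.2}
      = {y : E × ℝ | 0 ≤ y.2 ∧ ∀ i, f i y.1 ≤ b i * y.2} := rfl
  rwa [he] at h3

lemma prod_zero_isHCone {A : Set E} (hA : IsHCone A) : IsHCone (A ×ˢ ({0} : Set ℝ)) := by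
  obtain ⟨m, f, rfl⟩ := hA
  have h1 : IsHCone {y : E × ℝ | ∀ i, f i y.1 ≤ 0} :=
    ⟨m, fun i => (f i).comp (LinearMap.fst ℝ E ℝ), by ext y; simp⟩
  have h2 : IsHCone {y : E × ℝ | y.2 ≤ 0} := ⟨1, fun _ => LinearMap.snd ℝ E ℝ, by ext y; simp⟩
  have h3 : IsHCone {y : E × ℝ | -y.2 ≤ 0} :=
    ⟨1, fun _ => -(LinearMap.snd ℝ E ℝ), by ext y; simp⟩
  have h4 := h1.inter (h2.inter h3)
  have he : {y : E × ℝ | ∀ i, f i y.1 ≤ 0} ∩ ({y : E × ℝ | y.2 ≤ 0} ∩ {y : E × ℝ | -y.2 ≤ 0})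
      = {x | ∀ i, f i x ≤ 0} ×ˢ ({0} : Set ℝ) := by
    ext y
    simp only [Set.mem_inter_iff, Set.mem_setOf_eq, Set.mem_prod, Set.mem_singleton_iff]
    constructor
    · rintro ⟨ha, hb, hc⟩
      exact ⟨ha, le_antisymm hb (by linarith)⟩
    · rintro ⟨ha, hb⟩
      exact ⟨ha, by rw [hb], by rw [hb]; exact neg_nonpos.2 (le_refl 0)⟩
  rwa [he] at h4

lemma coneOver_snd_nonneg [FiniteDimensional ℝ E] (hS : IsPolyhedron S) (hne : S.Nonempty) :
    coneOver S ⊆ {y : E × ℝ | 0 ≤ y.2} := by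
  obtain ⟨m, f, b, hrep⟩ := hS
  rw [coneOver_hom hrep hne]
  exact fun y hy => hy.1

lemma openCone_subset_coneOver : openCone S ⊆ coneOver S := subset_closure

end ConeOver


section LP

open S3Aux

variable {E : Type*} [NormedAddCommGroup E] [NormedSpace ℝ E] {S : Set E}

lemma lp_attain [FiniteDimensional ℝ E] (hS : IsPolyhedron S) (hne : S.Nonempty)
    (x : E →ₗ[ℝ] ℝ) (hx : ∀ w ∈ recPoly S, 0 ≤ x w) : (faceSet S x).Nonempty := by
  classical
  obtain ⟨ι, _, g, hg⟩ := (coneOver_isHCone hS hne).exists_coneGen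
  have hCO := coneOver_eq hS hne
  have hgen : ∀ l, g l ∈ coneOver S := fun l => hg ▸ self_mem_coneGen g l
  have hsndpos : ∀ l, 0 ≤ (g l).2 := fun l => coneOver_snd_nonneg hS hne (hgen l)
  have hq1 : ∀ q ∈ S, ((q, (1:ℝ)) : E × ℝ) ∈ coneGen g := fun q hq =>
    hg ▸ openCone_subset_coneOver (mk_one_mem_openCone hq)
  set Pos : Finset ι := Finset.univ.filter (fun l => 0 < (g l).2) with hPos
  have hvalS : ∀ l ∈ Pos, ((g l).2)⁻¹ • (g l).1 ∈ S := by
    intro l hl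
    have h1 : g l ∈ openCone S ∪ (recPoly S) ×ˢ ({0} : Set ℝ) := hCO ▸ hgen l
    rcases h1 with h1 | h1
    · exact (mem_openCone.1 h1).2
    · exfalso
      have h2 : (g l).2 = 0 := h1.2
      have h3 : 0 < (g l).2 := (Finset.mem_filter.1 hl).2
      rw [h2] at h3
      exact lt_irrefl 0 h3
  obtain ⟨p, hp⟩ := hne
  have hsum : ∀ q ∈ S, ∀ d : ι → ℝ, ((q, (1:ℝ)) : E × ℝ) = ∑ l, d l • g l →
      q = (∑ l, d l • (g l).1) ∧ (1:ℝ) = ∑ l, d l * (g l).2 := by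
    intro q hqS d hd
    constructor
    · have h1 := congrArg Prod.fst hd
      rw [Prod.fst_sum] at h1
      simpa using h1
    · have h1 := congrArg Prod.snd hd
      rw [Prod.snd_sum] at h1
      simpa [smul_eq_mul] using h1
  have hPosne : Pos.Nonempty := by
    obtain ⟨c, hcn, hcs⟩ := hq1 p hp
    obtain ⟨-, hsum1⟩ := hsum p hp c hcs
    by_contra hempty
    rw [Finset.not_nonempty_iff_eq_empty] at hempty
    have hz : ∀ l, (g l).2 = 0 := by
      intro l
      by_contra h
      have hlt := lt_of_le_of_ne (hsndpos l) (Ne.symm h)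
      have hmem : l ∈ Pos := Finset.mem_filter.2 ⟨Finset.mem_univ l, hlt⟩
      rw [hempty] at hmem
      exact absurd hmem (Finset.notMem_empty l)
    rw [Finset.sum_congr rfl (fun l _ => by rw [hz l, mul_zero])] at hsum1
    simp at hsum1
  obtain ⟨l₀, hl₀, hminl⟩ :=
    Finset.exists_min_image Pos (fun l => x (((g l).2)⁻¹ • (g l).1)) hPosne
  refine ⟨((g l₀).2)⁻¹ • (g l₀).1, hvalS l₀ hl₀, ?_⟩
  intro q hq
  obtain ⟨d, hdn, hds⟩ := hq1 q hq
  obtain ⟨hfst, hsnd⟩ := hsum q hq d hds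
  have hxq : x q = ∑ l, d l * x ((g l).1) := by
    rw [hfst, map_sum]
    exact Finset.sum_congr rfl fun l _ => by rw [map_smul, smul_eq_mul]
  set M := x (((g l₀).2)⁻¹ • (g l₀).1) with hM
  have hterm : ∀ l, d l * (g l).2 * M ≤ d l * x ((g l).1) := by
    intro l
    by_cases hl : l ∈ Pos
    · have h4 : 0 < (g l).2 := (Finset.mem_filter.1 hl).2
      have h2 : x ((g l).1) = (g l).2 * x (((g l).2)⁻¹ • (g l).1) := by
        rw [map_smul, smul_eq_mul]
        field_simp
      have h3 : M ≤ x (((g l).2)⁻¹ • (g l).1) := hminl l hl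
      rw [h2]
      calc d l * (g l).2 * M ≤ d l * (g l).2 * x (((g l).2)⁻¹ • (g l).1) :=
            mul_le_mul_of_nonneg_left h3 (mul_nonneg (hdn l) h4.le)
        _ = d l * ((g l).2 * x (((g l).2)⁻¹ • (g l).1)) := by ring
    · have h2 : (g l).2 = 0 := by
        have := hsndpos l
        by_contra h
        exact hl (Finset.mem_filter.2 ⟨Finset.mem_univ l, lt_of_le_of_ne this (Ne.symm h)⟩)
      have h3 : g l ∈ openCone S ∪ (recPoly S) ×ˢ ({0} : Set ℝ) := hCO ▸ hgen l
      have h4 : (g l).1 ∈ recPoly S := by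
        rcases h3 with h3 | h3
        · exfalso
          have h5 := (mem_openCone.1 h3).1
          rw [h2] at h5
          exact lt_irrefl 0 h5
        · exact h3.1
      have h5 := hx _ h4
      rw [h2, mul_zero, zero_mul]
      exact mul_nonneg (hdn l) h5
  calc x (((g l₀).2)⁻¹ • (g l₀).1) = (∑ l, d l * (g l).2) * M := by rw [← hsnd, one_mul]
    _ = ∑ l, d l * (g l).2 * M := by rw [Finset.sum_mul]
    _ ≤ ∑ l, d l * x ((g l).1) := Finset.sum_le_sum fun l _ => hterm l
    _ = x q := hxq.symm

end LP

section Faces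

open S3Aux

variable {E : Type*} [NormedAddCommGroup E] [NormedSpace ℝ E] {S : Set E}

lemma zero_mem_recProd : ((0, 0) : E × ℝ) ∈ (recPoly S) ×ˢ ({0} : Set ℝ) :=
  ⟨zero_mem_recPoly, rfl⟩

lemma zero_mem_coneOver [FiniteDimensional ℝ E] (hS : IsPolyhedron S) (hne : S.Nonempty) :
    (0 : E × ℝ) ∈ coneOver S := by
  rw [coneOver_eq hS hne]
  right
  exact ⟨zero_mem_recPoly, rfl⟩

lemma recPoly_smul (hS : IsPolyhedron S) (hne : S.Nonempty) {w : E} (hw : w ∈ recPoly S)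
    {t : ℝ} (ht : 0 ≤ t) : t • w ∈ recPoly S := by
  obtain ⟨m, f, b, hrep⟩ := hS
  rw [recPoly_mem_char hrep hne] at hw ⊢
  intro i
  rw [map_smul, smul_eq_mul]
  exact mul_nonpos_of_nonneg_of_nonpos ht (hw i)

lemma coneOver_smul [FiniteDimensional ℝ E] (hS : IsPolyhedron S) (hne : S.Nonempty)
    {y : E × ℝ} (hy : y ∈ coneOver S) {t : ℝ} (ht : 0 ≤ t) : t • y ∈ coneOver S := by
  obtain ⟨m, f, b, hrep⟩ := hS
  rw [coneOver_hom hrep hne] at hy ⊢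
  obtain ⟨h1, h2⟩ := hy
  constructor
  · show 0 ≤ (t • y).2
    have : (t • y).2 = t * y.2 := rfl
    rw [this]
    exact mul_nonneg ht h1
  · intro i
    have hf : (t • y).1 = t • y.1 := rfl
    have hs : (t • y).2 = t * y.2 := rfl
    rw [hf, hs, map_smul, smul_eq_mul]
    calc t * f i y.1 ≤ t * (b i * y.2) := mul_le_mul_of_nonneg_left (h2 i) ht
      _ = b i * (t * y.2) := by ring

/-- Minimizing a linear functional over a set containing `0` on which it is nonnegative. -/
lemma faceSet_cone_eq {C : Set (E × ℝ)} {ξ : E × ℝ →ₗ[ℝ] ℝ} (h0 : (0 : E × ℝ) ∈ C)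
    (hpos : ∀ y ∈ C, 0 ≤ ξ y) : faceSet C ξ = {y ∈ C | ξ y = 0} := by
  ext y
  constructor
  · intro hy
    refine ⟨hy.1, le_antisymm ?_ (hpos y hy.1)⟩
    have h1 := hy.2 _ h0
    rwa [map_zero] at h1
  · rintro ⟨hy1, hy2⟩
    exact ⟨hy1, fun v hv => by rw [hy2]; exact hpos v hv⟩

lemma faceSet_cone_nonneg {C : Set (E × ℝ)} {ξ : E × ℝ →ₗ[ℝ] ℝ} (h0 : (0 : E × ℝ) ∈ C)
    (hscale : ∀ y ∈ C, (2:ℝ) • y ∈ C) (hne : (faceSet C ξ).Nonempty) :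
    ∀ y ∈ C, 0 ≤ ξ y := by
  obtain ⟨z, hz⟩ := hne
  have hz0 : ξ z = 0 := by
    have h1 := hz.2 _ h0
    rw [map_zero] at h1
    have h2 := hz.2 _ (hscale z hz.1)
    rw [map_smul, smul_eq_mul] at h2
    linarith
  exact fun y hy => hz0 ▸ hz.2 y hy

lemma xi_decomp (ξ : E × ℝ →ₗ[ℝ] ℝ) (y : E × ℝ) :
    ξ y = ξ.comp (LinearMap.inl ℝ E ℝ) y.1 + y.2 * ξ (0, 1) := by
  have h1 : y = (y.1, 0) + y.2 • ((0:E), (1:ℝ)) := by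
    have : y.2 • ((0:E), (1:ℝ)) = ((0:E), y.2) := by
      ext
      · simp
      · simp
    rw [this]
    ext <;> simp
  rw [LinearMap.comp_apply, LinearMap.inl_apply]
  conv_lhs => rw [h1]
  rw [map_add, map_smul, smul_eq_mul]

/-- Key identification: the part of the cone over `S` where an affine functional vanishes. -/
lemma coneOver_inter_ker [FiniteDimensional ℝ E] (hS : IsPolyhedron S) (hne : S.Nonempty)
    {x : E →ₗ[ℝ] ℝ} {p : E} (hp : p ∈ faceSet S x) {a : ℝ} (hpa : x p + a = 0) :
    {y ∈ coneOver S | x y.1 + y.2 * a = 0} = coneOver (faceSet S x) := by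
  have hFne : (faceSet S x).Nonempty := ⟨p, hp⟩
  have hFpoly : IsPolyhedron (faceSet S x) := hS.faceSet_poly hp
  have hrecF := recPoly_faceSet hS hFne
  rw [coneOver_eq hFpoly hFne]
  have hCO := coneOver_eq hS hne
  ext y
  simp only [Set.mem_setOf_eq, Set.mem_union, Set.mem_sep_iff]
  rw [hCO]
  constructor
  · rintro ⟨hy | hy, hker⟩
    · left
      obtain ⟨h1, h2⟩ := mem_openCone.1 hy
      rw [mem_openCone]
      refine ⟨h1, h2, fun v hv => ?_⟩
      have hx1 : x y.1 = y.2 * x (y.2⁻¹ • y.1) := by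
        rw [map_smul, smul_eq_mul]
        field_simp
      have h3 : x (y.2⁻¹ • y.1) + a = 0 := by
        have h4 : y.2 * (x (y.2⁻¹ • y.1) + a) = 0 := by rw [mul_add, ← hx1]; linarith [hker]
        rcases mul_eq_zero.1 h4 with h | h
        · exact absurd h (ne_of_gt h1)
        · exact h
      have h5 := hp.2 v hv
      linarith
    · right
      obtain ⟨hy1, hy2⟩ := hy
      rw [Set.mem_singleton_iff] at hy2
      rw [hy2, zero_mul, add_zero] at hker
      exact ⟨hrecF ▸ ⟨hy1, hker⟩, hy2⟩
  · rintro (hy | hy)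
    · obtain ⟨h1, h2⟩ := mem_openCone.1 hy
      constructor
      · left
        exact mem_openCone.2 ⟨h1, h2.1⟩
      · have hmin : x (y.2⁻¹ • y.1) = x p := le_antisymm (h2.2 p hp.1) (hp.2 _ h2.1)
        have hx1 : x y.1 = y.2 * x (y.2⁻¹ • y.1) := by
          rw [map_smul, smul_eq_mul]
          field_simp
        rw [hx1, hmin]
        have : x p = -a := by linarith
        rw [this]
        ring
    · obtain ⟨hy1, hy2⟩ := hy
      rw [Set.mem_singleton_iff] at hy2
      have h6 := hrecF ▸ hy1
      constructor
      · right
        exact ⟨h6.1, hy2⟩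
      · rw [hy2, zero_mul, add_zero]
        exact h6.2

end Faces


section Faces2

open S3Aux

variable {E : Type*} [NormedAddCommGroup E] [NormedSpace ℝ E] [FiniteDimensional ℝ E] {S : Set E}

noncomputable def mkXi (x : E →ₗ[ℝ] ℝ) (a : ℝ) : E × ℝ →ₗ[ℝ] ℝ :=
  x.comp (LinearMap.fst ℝ E ℝ) + a • (LinearMap.snd ℝ E ℝ)

lemma mkXi_apply (x : E →ₗ[ℝ] ℝ) (a : ℝ) (y : E × ℝ) : mkXi x a y = x y.1 + y.2 * a := by
  simp [mkXi, mul_comm]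

lemma face_of_coneOver (hS : IsPolyhedron S) (hne : S.Nonempty) {G : Set (E × ℝ)}
    (hG : IsFaceOf G (coneOver S)) :
    ∃ F : Set E, IsFaceOf F S ∧ (G = coneOver F ∨ G = recPoly F ×ˢ ({0} : Set ℝ)) := by
  obtain ⟨hGne, ξ, hGeq⟩ := hG
  have h0C := zero_mem_coneOver hS hne
  have hscale : ∀ y ∈ coneOver S, (2:ℝ) • y ∈ coneOver S :=
    fun y hy => coneOver_smul hS hne hy (by norm_num)
  have hpos : ∀ y ∈ coneOver S, 0 ≤ ξ y :=
    faceSet_cone_nonneg h0C hscale (hGeq ▸ hGne)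
  have hGset : G = {y ∈ coneOver S | ξ y = 0} := by
    rw [hGeq]
    exact faceSet_cone_eq h0C hpos
  set x : E →ₗ[ℝ] ℝ := ξ.comp (LinearMap.inl ℝ E ℝ) with hxdef
  set a : ℝ := ξ (0, 1) with hadef
  have hxi : ∀ y : E × ℝ, ξ y = x y.1 + y.2 * a := fun y => xi_decomp ξ y
  have hCO := coneOver_eq hS hne
  by_cases hcase : ∃ y ∈ G, 0 < y.2
  · obtain ⟨y₀, hy₀G, hy₀pos⟩ := hcase
    have hy₀ : y₀ ∈ coneOver S ∧ ξ y₀ = 0 := by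
      have := hGset ▸ hy₀G
      exact ⟨this.1, this.2⟩
    have hy₀open : y₀ ∈ openCone S := by
      have h1 : y₀ ∈ openCone S ∪ recPoly S ×ˢ {0} := hCO ▸ hy₀.1
      rcases h1 with h | h
      · exact h
      · exfalso
        have h2 : y₀.2 = 0 := h.2
        rw [h2] at hy₀pos
        exact lt_irrefl 0 hy₀pos
    obtain ⟨h1, h2⟩ := mem_openCone.1 hy₀open
    set u' : E := y₀.2⁻¹ • y₀.1 with hu'
    have hxu'a : x u' + a = 0 := by
      have h3 : ξ y₀ = 0 := hy₀.2
      rw [hxi y₀] at h3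
      have h4 : x u' = y₀.2⁻¹ * x y₀.1 := by rw [hu', map_smul, smul_eq_mul]
      have h5 : y₀.2 * (x u' + a) = x y₀.1 + y₀.2 * a := by
        rw [h4]
        field_simp
      have h6 : y₀.2 * (x u' + a) = 0 := by rw [h5, h3]
      rcases mul_eq_zero.1 h6 with h | h
      · exact absurd h (ne_of_gt h1)
      · exact h
    have hvS : ∀ v ∈ S, 0 ≤ x v + a := by
      intro v hv
      have h3 := hpos (v, 1) (openCone_subset_coneOver (mk_one_mem_openCone hv))
      rw [hxi] at h3
      simpa using h3
    have hu'F : u' ∈ faceSet S x := ⟨h2, fun v hv => by have := hvS v hv; linarith⟩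
    refine ⟨faceSet S x, ⟨⟨u', hu'F⟩, x, rfl⟩, Or.inl ?_⟩
    rw [hGset, ← coneOver_inter_ker hS hne hu'F hxu'a]
    ext y
    simp only [Set.mem_sep_iff]
    rw [hxi y]
  · push_neg at hcase
    have hxrec : ∀ w ∈ recPoly S, 0 ≤ x w := by
      intro w hw
      have h1 : ((w, 0) : E × ℝ) ∈ coneOver S := by
        rw [hCO]
        right
        exact ⟨hw, rfl⟩
      have h2 := hpos _ h1
      rw [hxi] at h2
      simpa using h2
    have hFne := lp_attain hS hne x hxrec
    refine ⟨faceSet S x, ⟨hFne, x, rfl⟩, Or.inr ?_⟩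
    rw [hGset, recPoly_faceSet hS hFne]
    ext y
    constructor
    · rintro ⟨hy1, hy2⟩
      have hy2' : y.2 = 0 := by
        have ha1 : y.2 ≤ 0 := hcase y (by rw [hGset]; exact ⟨hy1, hy2⟩)
        have ha2 : 0 ≤ y.2 := coneOver_snd_nonneg hS hne hy1
        linarith
      have hyrec : y.1 ∈ recPoly S := by
        have h1 : y ∈ openCone S ∪ recPoly S ×ˢ {0} := hCO ▸ hy1
        rcases h1 with h | h
        · exfalso
          have := (mem_openCone.1 h).1
          rw [hy2'] at this
          exact lt_irrefl 0 this
        · exact h.1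
      have hxy : x y.1 = 0 := by
        rw [hxi, hy2', zero_mul, add_zero] at hy2
        exact hy2
      exact ⟨⟨hyrec, hxy⟩, hy2'⟩
    · rintro ⟨⟨hw, hx0⟩, hy2⟩
      rw [Set.mem_singleton_iff] at hy2
      constructor
      · rw [hCO]
        right
        exact ⟨hw, hy2⟩
      · rw [hxi, hy2, zero_mul, add_zero]
        exact hx0

lemma face_of_recProd (hS : IsPolyhedron S) (hne : S.Nonempty) {G : Set (E × ℝ)}
    (hG : IsFaceOf G ((recPoly S) ×ˢ ({0} : Set ℝ))) :
    ∃ F : Set E, IsFaceOf F S ∧ G = recPoly F ×ˢ ({0} : Set ℝ) := by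
  obtain ⟨hGne, ξ, hGeq⟩ := hG
  have h0C : (0 : E × ℝ) ∈ (recPoly S) ×ˢ ({0} : Set ℝ) := ⟨zero_mem_recPoly, rfl⟩
  have hscale : ∀ y ∈ (recPoly S) ×ˢ ({0} : Set ℝ), (2:ℝ) • y ∈ (recPoly S) ×ˢ ({0} : Set ℝ) := by
    rintro ⟨w, t⟩ ⟨hw, ht⟩
    have ht' : t = 0 := ht
    refine ⟨recPoly_smul hS hne hw (by norm_num), ?_⟩
    show (2:ℝ) * t ∈ ({0} : Set ℝ)
    rw [ht', mul_zero]
    rfl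
  have hpos : ∀ y ∈ (recPoly S) ×ˢ ({0} : Set ℝ), 0 ≤ ξ y :=
    faceSet_cone_nonneg h0C hscale (hGeq ▸ hGne)
  have hGset : G = {y ∈ (recPoly S) ×ˢ ({0} : Set ℝ) | ξ y = 0} := by
    rw [hGeq]
    exact faceSet_cone_eq h0C hpos
  set x : E →ₗ[ℝ] ℝ := ξ.comp (LinearMap.inl ℝ E ℝ) with hxdef
  have hxi : ∀ y : E × ℝ, ξ y = x y.1 + y.2 * ξ (0,1) := fun y => xi_decomp ξ y
  have hxrec : ∀ w ∈ recPoly S, 0 ≤ x w := by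
    intro w hw
    have h2 := hpos (w, 0) ⟨hw, rfl⟩
    rw [hxi] at h2
    simpa using h2
  have hFne := lp_attain hS hne x hxrec
  refine ⟨faceSet S x, ⟨hFne, x, rfl⟩, ?_⟩
  rw [hGset, recPoly_faceSet hS hFne]
  ext y
  constructor
  · rintro ⟨⟨hw, ht⟩, hy2⟩
    rw [Set.mem_singleton_iff] at ht
    have hxy : x y.1 = 0 := by
      rw [hxi, ht, zero_mul, add_zero] at hy2
      exact hy2
    exact ⟨⟨hw, hxy⟩, ht⟩
  · rintro ⟨⟨hw, hx0⟩, ht⟩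
    rw [Set.mem_singleton_iff] at ht
    refine ⟨⟨hw, ht⟩, ?_⟩
    rw [hxi, ht, zero_mul, add_zero]
    exact hx0

lemma isFaceOf_coneOver_faceSet (hS : IsPolyhedron S) (hne : S.Nonempty) {x : E →ₗ[ℝ] ℝ}
    {p : E} (hp : p ∈ faceSet S x) :
    IsFaceOf (coneOver (faceSet S x)) (coneOver S) := by
  have happ := mkXi_apply x (-(x p))
  have hCO := coneOver_eq hS hne
  have hpos : ∀ y ∈ coneOver S, 0 ≤ mkXi x (-(x p)) y := by
    intro y hy
    rw [hCO] at hy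
    rcases hy with hy | hy
    · obtain ⟨h1, h2⟩ := mem_openCone.1 hy
      rw [happ]
      have h3 := hp.2 _ h2
      have h4 : x y.1 = y.2 * x (y.2⁻¹ • y.1) := by
        rw [map_smul, smul_eq_mul]
        field_simp
      have h5 := mul_le_mul_of_nonneg_left h3 h1.le
      rw [h4]
      nlinarith [h5]
    · rw [happ, hy.2, zero_mul, add_zero]
      exact faceSet_nonneg_rec hp hy.1
  refine ⟨⟨(p, 1), openCone_subset_coneOver (mk_one_mem_openCone hp)⟩, mkXi x (-(x p)), ?_⟩
  rw [faceSet_cone_eq (zero_mem_coneOver hS hne) hpos,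
    ← coneOver_inter_ker hS hne hp (by ring : x p + (-(x p)) = 0)]
  ext y
  simp only [Set.mem_sep_iff]
  rw [happ y]

lemma isFaceOf_KProd_coneOver (hS : IsPolyhedron S) (hne : S.Nonempty) {x : E →ₗ[ℝ] ℝ}
    (hx : ∀ w ∈ recPoly S, 0 ≤ x w) :
    IsFaceOf (({w ∈ recPoly S | x w = 0}) ×ˢ ({0} : Set ℝ)) (coneOver S) := by
  obtain ⟨p₀, hp₀⟩ := lp_attain hS hne x hx
  set a : ℝ := 1 - x p₀ with hadef
  have happ := mkXi_apply x a
  have hCO := coneOver_eq hS hne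
  have hoc : ∀ y ∈ openCone S, 0 < mkXi x a y := by
    intro y hy
    obtain ⟨h1, h2⟩ := mem_openCone.1 hy
    rw [happ]
    have h3 := hp₀.2 _ h2
    have h4 : x y.1 = y.2 * x (y.2⁻¹ • y.1) := by
      rw [map_smul, smul_eq_mul]
      field_simp
    have h5 := mul_le_mul_of_nonneg_left h3 h1.le
    rw [h4, hadef]
    nlinarith [h5, h1]
  have hpos : ∀ y ∈ coneOver S, 0 ≤ mkXi x a y := by
    intro y hy
    rw [hCO] at hy
    rcases hy with hy | hy
    · exact (hoc y hy).le
    · rw [happ, hy.2, zero_mul, add_zero]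
      exact hx _ hy.1
  refine ⟨⟨((0:E), (0:ℝ)), ⟨⟨zero_mem_recPoly, map_zero x⟩, rfl⟩⟩, mkXi x a, ?_⟩
  rw [faceSet_cone_eq (zero_mem_coneOver hS hne) hpos]
  ext y
  constructor
  · rintro ⟨⟨hw, hx0⟩, ht⟩
    rw [Set.mem_singleton_iff] at ht
    refine ⟨by rw [hCO]; right; exact ⟨hw, ht⟩, ?_⟩
    rw [happ, ht, zero_mul, add_zero]
    exact hx0
  · rintro ⟨hyC, hy0⟩
    have hyC' := hCO ▸ hyC
    rcases hyC' with hy | hy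
    · exfalso
      have := hoc y hy
      rw [hy0] at this
      exact lt_irrefl 0 this
    · have ht : y.2 = 0 := hy.2
      have hxy : x y.1 = 0 := by
        rw [happ, ht, zero_mul, add_zero] at hy0
        exact hy0
      exact ⟨⟨hy.1, hxy⟩, ht⟩

lemma isFaceOf_KProd_recProd (hS : IsPolyhedron S) (hne : S.Nonempty) {x : E →ₗ[ℝ] ℝ}
    (hx : ∀ w ∈ recPoly S, 0 ≤ x w) :
    IsFaceOf (({w ∈ recPoly S | x w = 0}) ×ˢ ({0} : Set ℝ))
      ((recPoly S) ×ˢ ({0} : Set ℝ)) := by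
  have happ := mkXi_apply x 0
  have hpos : ∀ y ∈ (recPoly S) ×ˢ ({0} : Set ℝ), 0 ≤ mkXi x 0 y := by
    rintro y ⟨hw, ht⟩
    rw [happ, mul_zero, add_zero]
    exact hx _ hw
  refine ⟨⟨((0:E), (0:ℝ)), ⟨⟨zero_mem_recPoly, map_zero x⟩, rfl⟩⟩, mkXi x 0, ?_⟩
  have h0C : (0 : E × ℝ) ∈ (recPoly S) ×ˢ ({0} : Set ℝ) := ⟨zero_mem_recPoly, rfl⟩
  rw [faceSet_cone_eq h0C hpos]
  ext y
  constructor
  · rintro ⟨⟨hw, hx0⟩, ht⟩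
    rw [Set.mem_singleton_iff] at ht
    exact ⟨⟨hw, ht⟩, by rw [happ, mul_zero, add_zero]; exact hx0⟩
  · rintro ⟨⟨hw, ht⟩, hy0⟩
    rw [Set.mem_singleton_iff] at ht
    rw [happ, mul_zero, add_zero] at hy0
    exact ⟨⟨hw, hy0⟩, ht⟩

end Faces2


section MW

open S3Aux

variable {E : Type*} [NormedAddCommGroup E] [NormedSpace ℝ E] [FiniteDimensional ℝ E]
variable {P : Set (Set E)} {S Λ Λ' : Set E}

lemma recPoly_ray' (hS : IsPolyhedron S) {u p : E} (hu : u ∈ recPoly S) (hp : p ∈ S)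
    {t : ℝ} (ht : 0 ≤ t) : p + t • u ∈ S := by
  obtain ⟨m, f, b, hrep⟩ := hS
  exact recPoly_ray hrep hu hp ht

lemma recPoly_inter_eq (h1 : IsPolyhedron Λ) (h2 : IsPolyhedron Λ')
    (hmeet : (Λ ∩ Λ').Nonempty) : recPoly (Λ ∩ Λ') = recPoly Λ ∩ recPoly Λ' := by
  obtain ⟨q, hq1, hq2⟩ := hmeet
  ext w
  constructor
  · intro hw
    constructor
    · obtain ⟨m, f, b, hrep⟩ := id h1
      refine locRec_subset_recPoly hrep hq1 ?_
      intro t ht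
      exact (recPoly_ray' (isPolyhedron_inter h1 h2) hw ⟨hq1, hq2⟩ ht).1
    · obtain ⟨m, f, b, hrep⟩ := id h2
      refine locRec_subset_recPoly hrep hq2 ?_
      intro t ht
      exact (recPoly_ray' (isPolyhedron_inter h1 h2) hw ⟨hq1, hq2⟩ ht).2
  · rintro ⟨ha, hb⟩ q' ⟨hq'1, hq'2⟩
    exact ⟨ha q' hq'1, hb q' hq'2⟩

lemma recPoly_subset_recSet (hP : IsPolyComplex P) (hMW : MWCondition (polySupport P))
    (hΛ : Λ ∈ P) : recPoly Λ ⊆ recSet (polySupport P) := by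
  obtain ⟨hpoly, hne⟩ := hP.2.2.1 Λ hΛ
  obtain ⟨p₀, hp₀⟩ := hne
  intro u hu
  have hp₀S : p₀ ∈ polySupport P := Set.mem_biUnion hΛ hp₀
  rw [← hMW p₀ hp₀S]
  intro t ht
  exact Set.mem_biUnion hΛ (recPoly_ray' hpoly hu hp₀ ht)

lemma exists_tail_cell (hP : IsPolyComplex P) {u : E} (hu : u ∈ recSet (polySupport P))
    {p : E} (hp : p ∈ polySupport P) :
    ∃ Λ ∈ P, u ∈ recPoly Λ ∧ ∃ t : ℝ, 0 ≤ t ∧ p + t • u ∈ Λ := by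
  have hray : ∀ t : ℝ, 0 ≤ t → p + t • u ∈ polySupport P := by
    intro t ht
    have h1 : u ∈ locRec (polySupport P) p := Set.mem_iInter₂.1 hu p hp
    exact h1 t ht
  have hcover : {t : ℝ | 0 ≤ t} = ⋃ Λ ∈ P, {t : ℝ | 0 ≤ t ∧ p + t • u ∈ Λ} := by
    ext t
    constructor
    · intro ht
      obtain ⟨Λ, hΛ, hmem⟩ := Set.mem_iUnion₂.1 (hray t ht)
      exact Set.mem_biUnion hΛ ⟨ht, hmem⟩
    · intro ht
      obtain ⟨Λ, hΛ, hmem⟩ := Set.mem_iUnion₂.1 ht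
      exact hmem.1
  have hnb : ¬ BddAbove {t : ℝ | 0 ≤ t} := by
    rintro ⟨M, hM⟩
    have h1 : max M 0 + 1 ∈ {t : ℝ | 0 ≤ t} := by
      simp only [Set.mem_setOf_eq]
      have := le_max_right M 0
      linarith
    have h2 := hM h1
    have := le_max_left M 0
    linarith
  have hub : ∃ Λ ∈ P, ¬ BddAbove {t : ℝ | 0 ≤ t ∧ p + t • u ∈ Λ} := by
    by_contra hcon
    push_neg at hcon
    apply hnb
    rw [hcover]
    exact (Set.Finite.bddAbove_biUnion hP.2.1).2 hcon
  obtain ⟨Λ, hΛ, hΛub⟩ := hub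
  rw [not_bddAbove_iff] at hΛub
  obtain ⟨hpoly, hne⟩ := hP.2.2.1 Λ hΛ
  obtain ⟨m, f, b, hrep⟩ := hpoly
  obtain ⟨t₀, ht₀, -⟩ := hΛub 0
  refine ⟨Λ, hΛ, ?_, t₀, ht₀.1, ht₀.2⟩
  rw [recPoly_mem_char hrep hne]
  intro i
  by_contra hpos
  push_neg at hpos
  obtain ⟨t₁, ht₁, ht₁big⟩ := hΛub (max 0 ((b i - f i p) / f i u))
  have hmem := ht₁.2
  rw [hrep] at hmem
  have h3 := hmem i
  rw [map_add, map_smul, smul_eq_mul] at h3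
  have h4 : (b i - f i p) / f i u < t₁ := lt_of_le_of_lt (le_max_right _ _) ht₁big
  rw [div_lt_iff₀ hpos] at h4
  linarith

lemma shadow_closed (hpoly : IsPolyhedron Λ) (hne : Λ.Nonempty) {u : E}
    (hu : u ∈ recPoly Λ) : IsClosed {y : E | ∃ t : ℝ, 0 ≤ t ∧ y + t • u ∈ Λ} := by
  obtain ⟨m, f, b, hrep⟩ := hpoly
  have hchar : {y : E | ∃ t : ℝ, 0 ≤ t ∧ y + t • u ∈ Λ}
      = ⋂ i, {y : E | f i u = 0 → f i y ≤ b i} := by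
    ext y
    simp only [Set.mem_setOf_eq, Set.mem_iInter]
    constructor
    · rintro ⟨t, ht, hmem⟩ i hi
      rw [hrep] at hmem
      have h1 := hmem i
      rwa [map_add, map_smul, smul_eq_mul, hi, mul_zero, add_zero] at h1
    · intro h
      rw [recPoly_mem_char hrep hne] at hu
      set t : ℝ := ∑ i, max 0 ((f i y - b i) / (-(f i u))) with htdef
      have ht0 : 0 ≤ t := Finset.sum_nonneg fun i _ => le_max_left 0 _
      refine ⟨t, ht0, ?_⟩
      rw [hrep]
      intro i
      rw [map_add, map_smul, smul_eq_mul]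
      rcases lt_or_eq_of_le (hu i) with hlt | heq
      · have h1 : (f i y - b i) / (-(f i u)) ≤ t := by
          rw [htdef]
          refine le_trans (le_max_right 0 _) ?_
          exact Finset.single_le_sum
            (f := fun j => max 0 ((f j y - b j) / (-(f j u))))
            (fun j _ => le_max_left 0 _) (Finset.mem_univ i)
        have h2 : 0 < -(f i u) := by linarith
        rw [div_le_iff₀ h2] at h1
        have h3 : t * -(f i u) = -(t * f i u) := by ring
        rw [h3] at h1
        linarith
      · rw [heq, mul_zero, add_zero]
        exact h i heq
  rw [hchar]
  refine isClosed_iInter fun i => ?_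
  by_cases h : f i u = 0
  · have he : {y : E | f i u = 0 → f i y ≤ b i} = {y | f i y ≤ b i} := by
      ext y
      simp [h]
    rw [he]
    exact IsClosed.preimage (f i).continuous_of_finiteDimensional isClosed_Iic
  · have he : {y : E | f i u = 0 → f i y ≤ b i} = Set.univ := by
      ext y
      simp [h]
    rw [he]
    exact isClosed_univ

lemma chain_connected (hP : IsPolyComplex P) (hconn : IsConnected (polySupport P))
    (hMW : MWCondition (polySupport P)) {u : E} (hu : u ∈ recSet (polySupport P))
    (hΛ : Λ ∈ P) (hΛ' : Λ' ∈ P) (hu1 : u ∈ recPoly Λ) (hu2 : u ∈ recPoly Λ') :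
    Relation.ReflTransGen
      (fun A B => B ∈ P ∧ u ∈ recPoly B ∧ (A ∩ B).Nonempty) Λ Λ' := by
  set r := fun A B : Set E => B ∈ P ∧ u ∈ recPoly B ∧ (A ∩ B).Nonempty with hrdef
  by_contra hcon
  set As : Set (Set E) := {T | T ∈ P ∧ u ∈ recPoly T ∧ Relation.ReflTransGen r Λ T} with hAs
  set Bs : Set (Set E) := {T | T ∈ P ∧ u ∈ recPoly T ∧ ¬ Relation.ReflTransGen r Λ T} with hBs
  set At : Set E := ⋃ T ∈ As, {y : E | ∃ t : ℝ, 0 ≤ t ∧ y + t • u ∈ T} with hAt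
  set Bt : Set E := ⋃ T ∈ Bs, {y : E | ∃ t : ℝ, 0 ≤ t ∧ y + t • u ∈ T} with hBt
  have hAfin : As.Finite := hP.2.1.subset fun _ h => h.1
  have hBfin : Bs.Finite := hP.2.1.subset fun _ h => h.1
  have hAtc : IsClosed At :=
    hAfin.isClosed_biUnion fun T hT =>
      shadow_closed (hP.2.2.1 T hT.1).1 (hP.2.2.1 T hT.1).2 hT.2.1
  have hBtc : IsClosed Bt :=
    hBfin.isClosed_biUnion fun T hT =>
      shadow_closed (hP.2.2.1 T hT.1).1 (hP.2.2.1 T hT.1).2 hT.2.1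
  have hcover : polySupport P ⊆ At ∪ Bt := by
    intro p hp
    obtain ⟨T, hTP, hTrec, t, ht, hmem⟩ := exists_tail_cell hP hu hp
    by_cases hchain : Relation.ReflTransGen r Λ T
    · exact Or.inl (Set.mem_biUnion (show T ∈ As from ⟨hTP, hTrec, hchain⟩) ⟨t, ht, hmem⟩)
    · exact Or.inr (Set.mem_biUnion (show T ∈ Bs from ⟨hTP, hTrec, hchain⟩) ⟨t, ht, hmem⟩)
  have hdisj : polySupport P ∩ (At ∩ Bt) = ∅ := by
    rw [Set.eq_empty_iff_forall_notMem]
    rintro p ⟨hpS, hpA, hpB⟩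
    obtain ⟨T₁, hT₁, ht₁mem⟩ := Set.mem_iUnion₂.1 hpA
    obtain ⟨T₂, hT₂, ht₂mem⟩ := Set.mem_iUnion₂.1 hpB
    obtain ⟨t₁, ht₁0, hm₁⟩ := ht₁mem
    obtain ⟨t₂, ht₂0, hm₂⟩ := ht₂mem
    have hcommon : (T₁ ∩ T₂).Nonempty := by
      rcases le_total t₁ t₂ with hle | hle
      · refine ⟨p + t₂ • u, ?_, hm₂⟩
        have heq : p + t₂ • u = (p + t₁ • u) + (t₂ - t₁) • u := by
          rw [sub_smul]
          abel
        rw [heq]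
        exact recPoly_ray' (hP.2.2.1 T₁ hT₁.1).1 hT₁.2.1 hm₁ (by linarith)
      · refine ⟨p + t₁ • u, hm₁, ?_⟩
        have heq : p + t₁ • u = (p + t₂ • u) + (t₁ - t₂) • u := by
          rw [sub_smul]
          abel
        rw [heq]
        exact recPoly_ray' (hP.2.2.1 T₂ hT₂.1).1 hT₂.2.1 hm₂ (by linarith)
    have hstep : r T₁ T₂ := ⟨hT₂.1, hT₂.2.1, hcommon⟩
    exact hT₂.2.2 (hT₁.2.2.tail hstep)
  have hΛA : Λ ∈ As := ⟨hΛ, hu1, Relation.ReflTransGen.refl⟩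
  have hΛ'B : Λ' ∈ Bs := ⟨hΛ', hu2, hcon⟩
  rcases isPreconnected_iff_subset_of_disjoint_closed.1 hconn.2 At Bt hAtc hBtc hcover hdisj
    with hsub | hsub
  · obtain ⟨q, hq⟩ := (hP.2.2.1 Λ' hΛ').2
    have hqA : q ∈ At := hsub (Set.mem_biUnion hΛ' hq)
    obtain ⟨T₁, hT₁, t₁, ht₁0, hm₁⟩ := Set.mem_iUnion₂.1 hqA
    have hm₂ : q + t₁ • u ∈ Λ' := recPoly_ray' (hP.2.2.1 Λ' hΛ').1 hu2 hq ht₁0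
    have hstep : r T₁ Λ' := ⟨hΛ', hu2, ⟨q + t₁ • u, hm₁, hm₂⟩⟩
    exact hcon (hT₁.2.2.tail hstep)
  · obtain ⟨q, hq⟩ := (hP.2.2.1 Λ hΛ).2
    have hqB : q ∈ Bt := hsub (Set.mem_biUnion hΛ hq)
    obtain ⟨T₂, hT₂, t₂, ht₂0, hm₂⟩ := Set.mem_iUnion₂.1 hqB
    have hm₁ : q + t₂ • u ∈ Λ := recPoly_ray' (hP.2.2.1 Λ hΛ).1 hu1 hq ht₂0
    have hstep : r Λ T₂ := ⟨hT₂.1, hT₂.2.1, ⟨q + t₂ • u, hm₁, hm₂⟩⟩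
    exact hT₂.2.2 (Relation.ReflTransGen.single hstep)

/-- The minimal-face candidate of a cone `C` at a point `u`. -/
def fmin (C : Set E) (u : E) : Set E := {v ∈ C | ∃ ε : ℝ, 0 < ε ∧ u - ε • v ∈ C}

lemma fmin_eq_of_ker {C K : Set E} {x : E →ₗ[ℝ] ℝ} (hK : K = C ∩ {w | x w = 0})
    (hxw : ∀ w ∈ C, 0 ≤ x w) {u : E} (hu : u ∈ K) : fmin C u = fmin K u := by
  have hxu : x u = 0 := (hK ▸ hu).2
  have hKC : K ⊆ C := hK ▸ Set.inter_subset_left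
  ext v
  constructor
  · rintro ⟨hv, ε, hε, hmem⟩
    have h1 : 0 ≤ x (u - ε • v) := hxw _ hmem
    rw [map_sub, map_smul, smul_eq_mul, hxu] at h1
    have h2 : 0 ≤ x v := hxw v hv
    have h3 : x v = 0 := by nlinarith
    refine ⟨hK ▸ ⟨hv, h3⟩, ε, hε, hK ▸ ⟨hmem, ?_⟩⟩
    show x (u - ε • v) = 0
    rw [map_sub, map_smul, smul_eq_mul, hxu, h3, mul_zero, sub_zero]
  · rintro ⟨hv, ε, hε, hmem⟩
    exact ⟨hKC hv, ε, hε, hKC hmem⟩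

lemma fmin_rec_eq_of_meet (hP : IsPolyComplex P) (hΛ : Λ ∈ P) (hΛ' : Λ' ∈ P)
    (hmeet : (Λ ∩ Λ').Nonempty) {u : E} (hu1 : u ∈ recPoly Λ) (hu2 : u ∈ recPoly Λ') :
    fmin (recPoly Λ) u = fmin (recPoly Λ') u := by
  obtain ⟨hf1, hf2⟩ := hP.2.2.2.2 Λ hΛ Λ' hΛ' hmeet
  obtain ⟨hpoly, hne⟩ := hP.2.2.1 Λ hΛ
  obtain ⟨hpoly', hne'⟩ := hP.2.2.1 Λ' hΛ'
  have hKrec : recPoly (Λ ∩ Λ') = recPoly Λ ∩ recPoly Λ' :=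
    recPoly_inter_eq hpoly hpoly' hmeet
  have huK : u ∈ recPoly (Λ ∩ Λ') := hKrec ▸ ⟨hu1, hu2⟩
  obtain ⟨hne1, x, hx⟩ := hf1
  obtain ⟨hne2, x', hx'⟩ := hf2
  have hxface : (faceSet Λ x).Nonempty := hx ▸ hne1
  have hxface' : (faceSet Λ' x').Nonempty := hx' ▸ hne2
  obtain ⟨q, hq⟩ := hxface
  obtain ⟨q', hq'⟩ := hxface'
  have e1 : recPoly (Λ ∩ Λ') = recPoly Λ ∩ {w | x w = 0} := by
    rw [hx]
    exact recPoly_faceSet hpoly ⟨q, hq⟩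
  have e2 : recPoly (Λ ∩ Λ') = recPoly Λ' ∩ {w | x' w = 0} := by
    rw [hx']
    exact recPoly_faceSet hpoly' ⟨q', hq'⟩
  have hxw : ∀ w ∈ recPoly Λ, 0 ≤ x w := fun w hw => faceSet_nonneg_rec hq hw
  have hxw' : ∀ w ∈ recPoly Λ', 0 ≤ x' w := fun w hw => faceSet_nonneg_rec hq' hw
  calc fmin (recPoly Λ) u = fmin (recPoly (Λ ∩ Λ')) u := fmin_eq_of_ker e1 hxw huK
    _ = fmin (recPoly Λ') u := (fmin_eq_of_ker e2 hxw' huK).symm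

lemma rec_inter_exposed (hP : IsPolyComplex P) (hconn : IsConnected (polySupport P))
    (hMW : MWCondition (polySupport P)) (hΛ : Λ ∈ P) (hΛ' : Λ' ∈ P) :
    ∃ x : E →ₗ[ℝ] ℝ, (∀ w ∈ recPoly Λ, 0 ≤ x w) ∧
      recPoly Λ ∩ recPoly Λ' = {w ∈ recPoly Λ | x w = 0} := by
  classical
  obtain ⟨hpoly, hne⟩ := hP.2.2.1 Λ hΛ
  obtain ⟨hpoly', hne'⟩ := hP.2.2.1 Λ' hΛ'
  obtain ⟨m, f, b, hrep⟩ := hpoly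
  obtain ⟨m', f', b', hrep'⟩ := hpoly'
  have hchar1 : recPoly Λ = {w | ∀ i, f i w ≤ 0} := recPoly_mem_char hrep hne
  have hchar2 : recPoly Λ' = {w | ∀ i, f' i w ≤ 0} := recPoly_mem_char hrep' hne'
  have hKH : IsHCone (recPoly Λ ∩ recPoly Λ') :=
    IsHCone.inter ⟨m, f, hchar1⟩ ⟨m', f', hchar2⟩
  obtain ⟨ι, _, gen, hgen⟩ := hKH.exists_coneGen
  set u : E := ∑ j, gen j with hudef
  have hgenK : ∀ j, gen j ∈ recPoly Λ ∩ recPoly Λ' := by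
    intro j
    rw [hgen]
    exact self_mem_coneGen gen j
  have huK : u ∈ recPoly Λ ∩ recPoly Λ' := by
    have h1 : u ∈ coneGen gen := ⟨fun _ => 1, fun _ => zero_le_one, by rw [hudef]; simp⟩
    rw [hgen]
    exact h1
  have hrecmem : ∀ z ∈ recPoly Λ, ∀ i, f i z ≤ 0 := by
    intro z hz
    rw [hchar1] at hz
    exact hz
  set I : Finset (Fin m) := Finset.univ.filter (fun i => f i u = 0) with hI
  set x : E →ₗ[ℝ] ℝ := ∑ i ∈ I, -(f i) with hxdef
  have hxapp : ∀ w, x w = ∑ i ∈ I, -(f i w) := by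
    intro w
    rw [hxdef]
    rw [LinearMap.coe_sum, Finset.sum_apply]
    exact Finset.sum_congr rfl fun i _ => rfl
  have hxnn : ∀ w ∈ recPoly Λ, 0 ≤ x w := by
    intro w hw
    rw [hchar1] at hw
    rw [hxapp]
    exact Finset.sum_nonneg fun i _ => neg_nonneg.2 (hw i)
  refine ⟨x, hxnn, ?_⟩
  have hIgen : ∀ i ∈ I, ∀ j, f i (gen j) = 0 := by
    intro i hi j
    have hiu : f i u = 0 := (Finset.mem_filter.1 hi).2
    have husum : f i u = ∑ j', f i (gen j') := by rw [hudef, map_sum]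
    have hterms : ∀ j' ∈ Finset.univ, f i (gen j') ≤ 0 := fun j' _ =>
      hrecmem _ (hgenK j').1 i
    have hz := (Finset.sum_eq_zero_iff_of_nonpos hterms).1 (by rw [← husum]; exact hiu)
    exact hz j (Finset.mem_univ j)
  have hKx : ∀ w ∈ recPoly Λ ∩ recPoly Λ', x w = 0 := by
    intro w hw
    have hwgen : w ∈ coneGen gen := by rw [← hgen]; exact hw
    obtain ⟨c, hcn, hcw⟩ := hwgen
    rw [hxapp]
    refine Finset.sum_eq_zero fun i hi => ?_
    rw [hcw, map_sum]
    rw [neg_eq_zero]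
    refine Finset.sum_eq_zero fun j _ => ?_
    rw [map_smul, smul_eq_mul, hIgen i hi j, mul_zero]
  ext w
  constructor
  · rintro ⟨hw1, hw2⟩
    exact ⟨hw1, hKx w ⟨hw1, hw2⟩⟩
  · rintro ⟨hwC, hwx⟩
    refine ⟨hwC, ?_⟩
    have hwC1 : ∀ i, f i w ≤ 0 := hrecmem _ hwC
    have hIw : ∀ i ∈ I, f i w = 0 := by
      intro i hi
      have h1 : ∀ j ∈ I, 0 ≤ -(f j w) := fun j _ => neg_nonneg.2 (hwC1 j)
      have h2 := (Finset.sum_eq_zero_iff_of_nonneg h1).1 (by rw [← hxapp]; exact hwx) i hi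
      linarith [neg_eq_zero.1 h2]
    set J : Finset (Fin m) := Finset.univ.filter (fun i => f i w < 0 ∧ f i u < 0) with hJ
    have hεex : ∃ ε : ℝ, 0 < ε ∧ ∀ i ∈ J, ε ≤ f i u / f i w := by
      by_cases hJne : J.Nonempty
      · refine ⟨min 1 (J.inf' hJne (fun i => f i u / f i w)), ?_, ?_⟩
        · refine lt_min one_pos ?_
          rw [Finset.lt_inf'_iff]
          intro i hi
          have h1 := (Finset.mem_filter.1 hi).2
          exact div_pos_of_neg_of_neg h1.2 h1.1
        · intro i hi
          exact le_trans (min_le_right _ _) (Finset.inf'_le _ hi)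
      · refine ⟨1, one_pos, fun i hi => absurd ⟨i, hi⟩ hJne⟩
    obtain ⟨ε, hε0, hεle⟩ := hεex
    have hmem : u - ε • w ∈ recPoly Λ := by
      rw [hchar1]
      intro i
      rw [map_sub, map_smul, smul_eq_mul]
      rcases lt_or_eq_of_le (hwC1 i) with hfw | hfw
      · have hfu : f i u < 0 := by
          rcases lt_or_eq_of_le (hrecmem _ huK.1 i) with h | h
          · exact h
          · exfalso
            have hiI : i ∈ I := Finset.mem_filter.2 ⟨Finset.mem_univ i, h⟩
            have h9 := hIw i hiI
            rw [h9] at hfw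
            exact lt_irrefl 0 hfw
        have hiJ : i ∈ J := Finset.mem_filter.2 ⟨Finset.mem_univ i, hfw, hfu⟩
        have h1 := hεle i hiJ
        rw [le_div_iff_of_neg hfw] at h1
        linarith
      · rw [hfw, mul_zero, sub_zero]
        exact hrecmem _ huK.1 i
    have hfeq : fmin (recPoly Λ) u = fmin (recPoly Λ') u := by
      have hchain := chain_connected hP hconn hMW
        (recPoly_subset_recSet hP hMW hΛ huK.1) hΛ hΛ' huK.1 huK.2
      have key : ∀ B, Relation.ReflTransGen
          (fun A B => B ∈ P ∧ u ∈ recPoly B ∧ (A ∩ B).Nonempty) Λ B →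
          B ∈ P ∧ u ∈ recPoly B ∧ fmin (recPoly Λ) u = fmin (recPoly B) u := by
        intro B hB
        induction hB with
        | refl => exact ⟨hΛ, huK.1, rfl⟩
        | tail hab hbc ih =>
          obtain ⟨hcP, hcu, hbc_ne⟩ := hbc
          obtain ⟨hbP, hbu, hfb⟩ := ih
          exact ⟨hcP, hcu, hfb.trans (fmin_rec_eq_of_meet hP hbP hcP hbc_ne hbu hcu)⟩
      exact (key Λ' hchain).2.2
    have hwin : w ∈ fmin (recPoly Λ) u := ⟨hwC, ε, hε0, hmem⟩
    rw [hfeq] at hwin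
    exact hwin.1

end MW


section Assemble

open S3Aux

variable {E : Type*} [NormedAddCommGroup E] [NormedSpace ℝ E] [FiniteDimensional ℝ E]
variable {P : Set (Set E)} {Λ Λ' : Set E}

lemma inter_coneOver_coneOver (h1 : IsPolyhedron Λ) (hne : Λ.Nonempty)
    (h2 : IsPolyhedron Λ') (hne' : Λ'.Nonempty) :
    coneOver Λ ∩ coneOver Λ' =
      openCone (Λ ∩ Λ') ∪ ((recPoly Λ ∩ recPoly Λ') ×ˢ ({0} : Set ℝ)) := by
  rw [coneOver_eq h1 hne, coneOver_eq h2 hne']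
  ext y
  constructor
  · rintro ⟨hy | hy, hy' | hy'⟩
    · left
      rw [← openCone_inter]
      exact ⟨hy, hy'⟩
    · exfalso
      have ha := (mem_openCone.1 hy).1
      have hb : y.2 = 0 := hy'.2
      rw [hb] at ha
      exact lt_irrefl 0 ha
    · exfalso
      have ha := (mem_openCone.1 hy').1
      have hb : y.2 = 0 := hy.2
      rw [hb] at ha
      exact lt_irrefl 0 ha
    · exact Or.inr ⟨⟨hy.1, hy'.1⟩, hy.2⟩
  · rintro (hy | hy)
    · rw [← openCone_inter] at hy
      exact ⟨Or.inl hy.1, Or.inl hy.2⟩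
    · exact ⟨Or.inr ⟨hy.1.1, hy.2⟩, Or.inr ⟨hy.1.2, hy.2⟩⟩

lemma openCone_empty : openCone (∅ : Set E) = ∅ := by
  ext y
  simp only [Set.mem_empty_iff_false, iff_false]
  intro hy
  obtain ⟨u, hu, -⟩ := hy
  exact hu

lemma inter_coneOver_recProd (h1 : IsPolyhedron Λ) (hne : Λ.Nonempty) :
    coneOver Λ ∩ ((recPoly Λ') ×ˢ ({0} : Set ℝ)) =
      (recPoly Λ ∩ recPoly Λ') ×ˢ ({0} : Set ℝ) := by
  rw [coneOver_eq h1 hne]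
  ext y
  constructor
  · rintro ⟨hy | hy, hy'⟩
    · exfalso
      have ha := (mem_openCone.1 hy).1
      have hb : y.2 = 0 := hy'.2
      rw [hb] at ha
      exact lt_irrefl 0 ha
    · exact ⟨⟨hy.1, hy'.1⟩, hy.2⟩
  · rintro ⟨⟨ha, hb⟩, hc⟩
    exact ⟨Or.inr ⟨ha, hc⟩, ⟨hb, hc⟩⟩

lemma inter_recProd_recProd :
    ((recPoly Λ) ×ˢ ({0} : Set ℝ)) ∩ ((recPoly Λ') ×ˢ ({0} : Set ℝ)) =
      (recPoly Λ ∩ recPoly Λ') ×ˢ ({0} : Set ℝ) := by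
  ext y
  constructor
  · rintro ⟨⟨ha, hb⟩, ⟨hc, hd⟩⟩
    exact ⟨⟨ha, hc⟩, hb⟩
  · rintro ⟨⟨ha, hc⟩, hb⟩
    exact ⟨⟨ha, hb⟩, ⟨hc, hb⟩⟩

/-- The key face packaging: `(recPoly Λ ∩ recPoly Λ') × {0}` is a face of `coneOver Λ`
and of `recPoly Λ ×ˢ {0}`. -/
lemma KProd_isFaceOf_coneOver (hP : IsPolyComplex P) (hconn : IsConnected (polySupport P))
    (hMW : MWCondition (polySupport P)) (hΛ : Λ ∈ P) (hΛ' : Λ' ∈ P) :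
    IsFaceOf ((recPoly Λ ∩ recPoly Λ') ×ˢ ({0} : Set ℝ)) (coneOver Λ) := by
  obtain ⟨x, hx1, hx2⟩ := rec_inter_exposed hP hconn hMW hΛ hΛ'
  rw [hx2]
  exact isFaceOf_KProd_coneOver (hP.2.2.1 Λ hΛ).1 (hP.2.2.1 Λ hΛ).2 hx1

lemma KProd_isFaceOf_recProd (hP : IsPolyComplex P) (hconn : IsConnected (polySupport P))
    (hMW : MWCondition (polySupport P)) (hΛ : Λ ∈ P) (hΛ' : Λ' ∈ P) :
    IsFaceOf ((recPoly Λ ∩ recPoly Λ') ×ˢ ({0} : Set ℝ)) ((recPoly Λ) ×ˢ ({0} : Set ℝ)) := by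
  obtain ⟨x, hx1, hx2⟩ := rec_inter_exposed hP hconn hMW hΛ hΛ'
  rw [hx2]
  exact isFaceOf_KProd_recProd (hP.2.2.1 Λ hΛ).1 (hP.2.2.1 Λ hΛ).2 hx1

lemma coneOver_inter_isFaceOf (hP : IsPolyComplex P) (hΛ : Λ ∈ P) (hΛ' : Λ' ∈ P)
    (hmeet : (Λ ∩ Λ').Nonempty) :
    IsFaceOf (coneOver (Λ ∩ Λ')) (coneOver Λ) := by
  obtain ⟨hne12, x, hx⟩ := (hP.2.2.2.2 Λ hΛ Λ' hΛ' hmeet).1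
  obtain ⟨p, hp⟩ := hne12
  rw [hx]
  exact isFaceOf_coneOver_faceSet (hP.2.2.1 Λ hΛ).1 (hP.2.2.1 Λ hΛ).2 (hx ▸ hp)

lemma coneOver_coneOver_inter (hP : IsPolyComplex P) (hΛ : Λ ∈ P) (hΛ' : Λ' ∈ P)
    (hmeet : (Λ ∩ Λ').Nonempty) :
    coneOver Λ ∩ coneOver Λ' = coneOver (Λ ∩ Λ') := by
  have h1 := (hP.2.2.1 Λ hΛ).1
  have hne := (hP.2.2.1 Λ hΛ).2
  have h2 := (hP.2.2.1 Λ' hΛ').1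
  have hne' := (hP.2.2.1 Λ' hΛ').2
  rw [inter_coneOver_coneOver h1 hne h2 hne',
    coneOver_eq (isPolyhedron_inter h1 h2) hmeet,
    recPoly_inter_eq h1 h2 hmeet]

end Assemble

/-- Theorem 14(2): if the support of a polyhedral complex `Π`
is connected and satisfies the Minkowski-Weyl condition, then `c(Π)` is a conic
polyhedral complex in `ℝⁿ × ℝ_{≥0}` with support `c(|Π|)`. -/
theorem statement3 {n : ℕ} (P : Set (Set (Fin n → ℝ))) (hP : IsPolyComplex P)
    (hconn : IsConnected (polySupport P)) (hMW : MWCondition (polySupport P)) :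
    IsConicPolyComplex (coneComplex P) ∧
    polySupport (coneComplex P) ⊆ {y : (Fin n → ℝ) × ℝ | 0 ≤ y.2} ∧
    polySupport (coneComplex P) = coneOver (polySupport P) := by
  have hmemP := hP.2.2.1
  have hrecsub : ∀ Λ ∈ P, recPoly Λ ×ˢ ({0} : Set ℝ) ⊆ coneOver Λ := by
    intro Λ hΛ
    rw [coneOver_eq (hmemP Λ hΛ).1 (hmemP Λ hΛ).2]
    exact Set.subset_union_right
  refine ⟨⟨⟨?_, ?_, ?_, ?_, ?_⟩, ?_⟩, ?_, ?_⟩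
  · obtain ⟨Λ₀, hΛ₀⟩ := hP.1
    exact ⟨coneOver Λ₀, Or.inl ⟨Λ₀, hΛ₀, rfl⟩⟩
  · have h1 : coneComplex P ⊆
        ((fun Λ => coneOver Λ) '' P) ∪ ((fun Λ => recPoly Λ ×ˢ ({0} : Set ℝ)) '' P) := by
      rintro σ (⟨Λ, hΛ, rfl⟩ | ⟨Λ, hΛ, rfl⟩)
      · exact Or.inl ⟨Λ, hΛ, rfl⟩
      · exact Or.inr ⟨Λ, hΛ, rfl⟩
    exact Set.Finite.subset ((hP.2.1.image _).union (hP.2.1.image _)) h1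
  · rintro σ (⟨Λ, hΛ, rfl⟩ | ⟨Λ, hΛ, rfl⟩)
    · obtain ⟨p, hp⟩ := (hmemP Λ hΛ).2
      exact ⟨(coneOver_isHCone (hmemP Λ hΛ).1 (hmemP Λ hΛ).2).isPolyhedron,
        ⟨(p, 1), openCone_subset_coneOver (mk_one_mem_openCone hp)⟩⟩
    · exact ⟨(prod_zero_isHCone (recPoly_isHCone (hmemP Λ hΛ).1 (hmemP Λ hΛ).2)).isPolyhedron,
        ⟨((0 : Fin n → ℝ), (0:ℝ)), zero_mem_recProd⟩⟩
  · rintro σ (⟨Λ, hΛ, rfl⟩ | ⟨Λ, hΛ, rfl⟩) G hG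
    · obtain ⟨F, hF, hcase⟩ := face_of_coneOver (hmemP Λ hΛ).1 (hmemP Λ hΛ).2 hG
      have hFP : F ∈ P := hP.2.2.2.1 Λ hΛ F hF
      rcases hcase with rfl | rfl
      · exact Or.inl ⟨F, hFP, rfl⟩
      · exact Or.inr ⟨F, hFP, rfl⟩
    · obtain ⟨F, hF, rfl⟩ := face_of_recProd (hmemP Λ hΛ).1 (hmemP Λ hΛ).2 hG
      exact Or.inr ⟨F, hP.2.2.2.1 Λ hΛ F hF, rfl⟩
  · rintro σ hσ τ hτ hne_st
    rcases hσ with ⟨Λ, hΛ, rfl⟩ | ⟨Λ, hΛ, rfl⟩ <;>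
      rcases hτ with ⟨Λ', hΛ', rfl⟩ | ⟨Λ', hΛ', rfl⟩
    · by_cases hmeet : (Λ ∩ Λ').Nonempty
      · rw [coneOver_coneOver_inter hP hΛ hΛ' hmeet]
        refine ⟨coneOver_inter_isFaceOf hP hΛ hΛ' hmeet, ?_⟩
        have h1 := coneOver_inter_isFaceOf hP hΛ' hΛ (by rwa [Set.inter_comm])
        rwa [Set.inter_comm Λ' Λ] at h1
      · have hempty : Λ ∩ Λ' = ∅ := Set.not_nonempty_iff_eq_empty.1 hmeet
        have heq : coneOver Λ ∩ coneOver Λ'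
            = (recPoly Λ ∩ recPoly Λ') ×ˢ ({0} : Set ℝ) := by
          rw [inter_coneOver_coneOver (hmemP Λ hΛ).1 (hmemP Λ hΛ).2
            (hmemP Λ' hΛ').1 (hmemP Λ' hΛ').2, hempty, openCone_empty,
            Set.empty_union]
        rw [heq]
        refine ⟨KProd_isFaceOf_coneOver hP hconn hMW hΛ hΛ', ?_⟩
        rw [Set.inter_comm (recPoly Λ)]
        exact KProd_isFaceOf_coneOver hP hconn hMW hΛ' hΛ
    · rw [inter_coneOver_recProd (hmemP Λ hΛ).1 (hmemP Λ hΛ).2]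
      refine ⟨KProd_isFaceOf_coneOver hP hconn hMW hΛ hΛ', ?_⟩
      rw [Set.inter_comm (recPoly Λ)]
      exact KProd_isFaceOf_recProd hP hconn hMW hΛ' hΛ
    · have heq : (recPoly Λ) ×ˢ ({0} : Set ℝ) ∩ coneOver Λ'
          = (recPoly Λ ∩ recPoly Λ') ×ˢ ({0} : Set ℝ) := by
        rw [Set.inter_comm, inter_coneOver_recProd (hmemP Λ' hΛ').1 (hmemP Λ' hΛ').2,
          Set.inter_comm (recPoly Λ')]
      rw [heq]
      refine ⟨KProd_isFaceOf_recProd hP hconn hMW hΛ hΛ', ?_⟩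
      rw [Set.inter_comm (recPoly Λ)]
      exact KProd_isFaceOf_coneOver hP hconn hMW hΛ' hΛ
    · rw [inter_recProd_recProd]
      refine ⟨KProd_isFaceOf_recProd hP hconn hMW hΛ hΛ', ?_⟩
      rw [Set.inter_comm (recPoly Λ)]
      exact KProd_isFaceOf_recProd hP hconn hMW hΛ' hΛ
  · rintro σ (⟨Λ, hΛ, rfl⟩ | ⟨Λ, hΛ, rfl⟩)
    · exact (coneOver_isHCone (hmemP Λ hΛ).1 (hmemP Λ hΛ).2).isPolyhedralCone
    · exact (prod_zero_isHCone (recPoly_isHCone (hmemP Λ hΛ).1 (hmemP Λ hΛ).2)).isPolyhedralCone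
  · rintro y hy
    obtain ⟨σ, hσ, hyσ⟩ := Set.mem_iUnion₂.1 hy
    rcases hσ with ⟨Λ, hΛ, rfl⟩ | ⟨Λ, hΛ, rfl⟩
    · exact coneOver_snd_nonneg (hmemP Λ hΛ).1 (hmemP Λ hΛ).2 hyσ
    · have h0 : y.2 = 0 := hyσ.2
      exact le_of_eq h0.symm
  · have hA : coneOver (polySupport P) = ⋃ Λ ∈ P, coneOver Λ := by
      have h1 : openCone (polySupport P) = ⋃ Λ ∈ P, openCone Λ := by
        ext y
        constructor
        · intro hy
          obtain ⟨ht, hu⟩ := mem_openCone.1 hy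
          obtain ⟨Λ, hΛ, hmem⟩ := Set.mem_iUnion₂.1 hu
          exact Set.mem_biUnion hΛ (mem_openCone.2 ⟨ht, hmem⟩)
        · intro hy
          obtain ⟨Λ, hΛ, hmem⟩ := Set.mem_iUnion₂.1 hy
          obtain ⟨ht, hu⟩ := mem_openCone.1 hmem
          exact mem_openCone.2 ⟨ht, Set.mem_biUnion hΛ hu⟩
      have h2 : coneOver (polySupport P) = closure (openCone (polySupport P)) := rfl
      rw [h2, h1]
      apply Set.Subset.antisymm
      · refine closure_minimal ?_ ?_
        · exact Set.iUnion₂_mono fun Λ hΛ => subset_closure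
        · exact Set.Finite.isClosed_biUnion hP.2.1 fun Λ hΛ => isClosed_closure
      · refine Set.iUnion₂_subset fun Λ hΛ => ?_
        have h3 : openCone Λ ⊆ ⋃ Λ ∈ P, openCone Λ := Set.subset_biUnion_of_mem (u := openCone) hΛ
        exact closure_mono h3
    rw [hA]
    ext y
    constructor
    · intro hy
      obtain ⟨σ, hσ, hyσ⟩ := Set.mem_iUnion₂.1 hy
      rcases hσ with ⟨Λ, hΛ, rfl⟩ | ⟨Λ, hΛ, rfl⟩
      · exact Set.mem_biUnion hΛ hyσ
      · exact Set.mem_biUnion hΛ (hrecsub Λ hΛ hyσ)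
    · intro hy
      obtain ⟨Λ, hΛ, hyΛ⟩ := Set.mem_iUnion₂.1 hy
      exact Set.mem_biUnion (Or.inl ⟨Λ, hΛ, rfl⟩) hyΛ
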